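/- arXiv:1812.09349 — 4 statements merged into one kernel-verified Lean document; each statement's English description precedes it below -/
import Mathlib

section
/- Let Λ be a ring and let F be an additive subfunctor of Ext¹_Λ(−,−) with enough projectives and enough injectives. Then the pair (𝒫(F), ℐ(F)) of F-projective and F-injective modules forms an admissible Hom-balanced pair: 𝒫(F)-precovers are surjective, ℐ(F)-preenvelopes are injective, every Λ-module admits a Hom_Λ(−, ℐ(F))-exact left 𝒫(F)-resolution, and every Λ-module admits a Hom_Λ(𝒫(F), −)-exact right ℐ(F)-resolution. -/
universe v u

open Function LinearMap

section RelHom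

variable {R : Type u} [Ring R]

/-- A short exact sequence of `R`-modules, given by two composable linear maps. -/
def IsSES {A B C : Type v} [AddCommGroup A] [Module R A] [AddCommGroup B] [Module R B]
    [AddCommGroup C] [Module R C] (f : A →ₗ[R] B) (g : B →ₗ[R] C) : Prop :=
  Function.Injective f ∧ Function.Surjective g ∧ LinearMap.range f = LinearMap.ker g

/-- A short exact sequence `0 → A →f B →g C → 0` is `Hom(-,𝒴)`-exact iff every map
`A → Y` with `Y ∈ 𝒴` extends along `f`. -/
def HomIntoExact (𝒴 : Set (ModuleCat.{v} R)) {A B : Type v} [AddCommGroup A] [Module R A]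
    [AddCommGroup B] [Module R B] (f : A →ₗ[R] B) : Prop :=
  ∀ Y ∈ 𝒴, ∀ φ : A →ₗ[R] ↥Y, ∃ ψ : B →ₗ[R] ↥Y, ψ ∘ₗ f = φ

/-- A short exact sequence `0 → A →f B →g C → 0` is `Hom(𝒳,-)`-exact iff every map
`X → C` with `X ∈ 𝒳` lifts along `g`. -/
def HomFromExact (𝒳 : Set (ModuleCat.{v} R)) {B C : Type v} [AddCommGroup B] [Module R B]
    [AddCommGroup C] [Module R C] (g : B →ₗ[R] C) : Prop :=
  ∀ X ∈ 𝒳, ∀ φ : ↥X →ₗ[R] C, ∃ ψ : ↥X →ₗ[R] B, g ∘ₗ ψ = φ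

end RelHom

section Resolutions

variable {R : Type u} [Ring R]

/-- A (deleted-augmented) left `𝒞`-resolution `⋯ → X₁ → X₀ → M → 0` of `M`:
a complex with entries in `𝒞`. -/
structure LeftResolution (𝒞 : Set (ModuleCat.{v} R)) (M : ModuleCat.{v} R) where
  X : ℕ → ModuleCat.{v} R
  mem : ∀ n, X n ∈ 𝒞
  d0 : ↥(X 0) →ₗ[R] ↥M
  d : ∀ n, ↥(X (n + 1)) →ₗ[R] ↥(X n)
  comp0 : d0 ∘ₗ d 0 = 0
  comp : ∀ n, d n ∘ₗ d (n + 1) = 0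

/-- The complex `⋯ → X₁ → X₀ → M → 0` is `Hom(𝒳,-)`-exact (this is the defining
property of a *left resolution* relative to `𝒳`). -/
def LeftResolution.IsHomXExact {𝒞 : Set (ModuleCat.{v} R)} {M : ModuleCat.{v} R}
    (res : LeftResolution 𝒞 M) (𝒳 : Set (ModuleCat.{v} R)) : Prop :=
  ∀ Q ∈ 𝒳,
    (∀ φ : ↥Q →ₗ[R] ↥M, ∃ ψ : ↥Q →ₗ[R] ↥(res.X 0), res.d0 ∘ₗ ψ = φ) ∧
    (∀ φ : ↥Q →ₗ[R] ↥(res.X 0), res.d0 ∘ₗ φ = 0 →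
      ∃ ψ : ↥Q →ₗ[R] ↥(res.X 1), res.d 0 ∘ₗ ψ = φ) ∧
    (∀ (n : ℕ) (φ : ↥Q →ₗ[R] ↥(res.X (n + 1))), res.d n ∘ₗ φ = 0 →
      ∃ ψ : ↥Q →ₗ[R] ↥(res.X (n + 2)), res.d (n + 1) ∘ₗ ψ = φ)

/-- The complex `⋯ → X₁ → X₀ → M → 0` is `Hom(-,𝒴)`-exact. -/
def LeftResolution.IsHomYExact {𝒞 : Set (ModuleCat.{v} R)} {M : ModuleCat.{v} R}
    (res : LeftResolution 𝒞 M) (𝒴 : Set (ModuleCat.{v} R)) : Prop :=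
  ∀ I ∈ 𝒴,
    (∀ χ : ↥M →ₗ[R] ↥I, χ ∘ₗ res.d0 = 0 → χ = 0) ∧
    (∀ φ : ↥(res.X 0) →ₗ[R] ↥I, φ ∘ₗ res.d 0 = 0 →
      ∃ χ : ↥M →ₗ[R] ↥I, χ ∘ₗ res.d0 = φ) ∧
    (∀ (n : ℕ) (φ : ↥(res.X (n + 1)) →ₗ[R] ↥I), φ ∘ₗ res.d (n + 1) = 0 →
      ∃ ψ : ↥(res.X n) →ₗ[R] ↥I, ψ ∘ₗ res.d n = φ)

/-- A (deleted-augmented) right `𝒞`-resolution `0 → M → Y⁰ → Y¹ → ⋯` of `M`. -/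
structure RightResolution (𝒞 : Set (ModuleCat.{v} R)) (M : ModuleCat.{v} R) where
  Y : ℕ → ModuleCat.{v} R
  mem : ∀ n, Y n ∈ 𝒞
  e0 : ↥M →ₗ[R] ↥(Y 0)
  e : ∀ n, ↥(Y n) →ₗ[R] ↥(Y (n + 1))
  comp0 : e 0 ∘ₗ e0 = 0
  comp : ∀ n, e (n + 1) ∘ₗ e n = 0

/-- The complex `0 → M → Y⁰ → Y¹ → ⋯` is `Hom(-,𝒴)`-exact (the defining property of a
*right resolution* relative to `𝒴`). -/
def RightResolution.IsHomYExact {𝒞 : Set (ModuleCat.{v} R)} {M : ModuleCat.{v} R}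
    (res : RightResolution 𝒞 M) (𝒴 : Set (ModuleCat.{v} R)) : Prop :=
  ∀ I ∈ 𝒴,
    (∀ φ : ↥M →ₗ[R] ↥I, ∃ ψ : ↥(res.Y 0) →ₗ[R] ↥I, ψ ∘ₗ res.e0 = φ) ∧
    (∀ φ : ↥(res.Y 0) →ₗ[R] ↥I, φ ∘ₗ res.e0 = 0 →
      ∃ ψ : ↥(res.Y 1) →ₗ[R] ↥I, ψ ∘ₗ res.e 0 = φ) ∧
    (∀ (n : ℕ) (φ : ↥(res.Y (n + 1)) →ₗ[R] ↥I), φ ∘ₗ res.e n = 0 →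
      ∃ ψ : ↥(res.Y (n + 2)) →ₗ[R] ↥I, ψ ∘ₗ res.e (n + 1) = φ)

/-- The complex `0 → M → Y⁰ → Y¹ → ⋯` is `Hom(𝒳,-)`-exact. -/
def RightResolution.IsHomXExact {𝒞 : Set (ModuleCat.{v} R)} {M : ModuleCat.{v} R}
    (res : RightResolution 𝒞 M) (𝒳 : Set (ModuleCat.{v} R)) : Prop :=
  ∀ Q ∈ 𝒳,
    (∀ χ : ↥Q →ₗ[R] ↥M, res.e0 ∘ₗ χ = 0 → χ = 0) ∧
    (∀ φ : ↥Q →ₗ[R] ↥(res.Y 0), res.e 0 ∘ₗ φ = 0 →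
      ∃ χ : ↥Q →ₗ[R] ↥M, res.e0 ∘ₗ χ = φ) ∧
    (∀ (n : ℕ) (φ : ↥Q →ₗ[R] ↥(res.Y (n + 1))), res.e (n + 1) ∘ₗ φ = 0 →
      ∃ ψ : ↥Q →ₗ[R] ↥(res.Y n), res.e n ∘ₗ ψ = φ)

end Resolutions

section Subfunctor

variable (R : Type u) [Ring R]

/-- An additive subfunctor `F ⊆ Ext¹_Λ(-,-)`, encoded by its class of `F`-exact short
exact sequences: a class of short exact sequences containing the split ones and closed
under pullback (base change), pushout (cobase change) and binary direct sums.  (These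
closure properties characterize the additive subfunctors of `Ext¹`.) -/
structure ExtSubfunctor where
  FExact : ∀ {A B C : Type v} [AddCommGroup A] [Module R A] [AddCommGroup B] [Module R B]
    [AddCommGroup C] [Module R C], (A →ₗ[R] B) → (B →ₗ[R] C) → Prop
  ses : ∀ {A B C : Type v} [AddCommGroup A] [Module R A] [AddCommGroup B] [Module R B]
    [AddCommGroup C] [Module R C] (f : A →ₗ[R] B) (g : B →ₗ[R] C),
    FExact f g → IsSES f g
  split_mem : ∀ (A C : Type v) [AddCommGroup A] [Module R A] [AddCommGroup C] [Module R C],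
    FExact (LinearMap.inl R A C) (LinearMap.snd R A C)
  pullback_closed : ∀ {A B C C' P : Type v}
    [AddCommGroup A] [Module R A] [AddCommGroup B] [Module R B]
    [AddCommGroup C] [Module R C] [AddCommGroup C'] [Module R C']
    [AddCommGroup P] [Module R P]
    (f : A →ₗ[R] B) (g : B →ₗ[R] C) (α : C' →ₗ[R] C)
    (j : P →ₗ[R] B) (q : P →ₗ[R] C') (i : A →ₗ[R] P),
    FExact f g →
    Function.Injective (LinearMap.prod j q) →
    LinearMap.range (LinearMap.prod j q) =
      LinearMap.ker ((g ∘ₗ LinearMap.fst R B C') - (α ∘ₗ LinearMap.snd R B C')) →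
    j ∘ₗ i = f → q ∘ₗ i = 0 →
    FExact i q
  pushout_closed : ∀ {A B C A' D : Type v}
    [AddCommGroup A] [Module R A] [AddCommGroup B] [Module R B]
    [AddCommGroup C] [Module R C] [AddCommGroup A'] [Module R A']
    [AddCommGroup D] [Module R D]
    (f : A →ₗ[R] B) (g : B →ₗ[R] C) (β : A →ₗ[R] A')
    (p : (B × A') →ₗ[R] D) (q : D →ₗ[R] C),
    FExact f g →
    Function.Surjective p →
    LinearMap.ker p = LinearMap.range (LinearMap.prod f (-β)) →
    q ∘ₗ p = g ∘ₗ LinearMap.fst R B A' →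
    FExact (p ∘ₗ LinearMap.inr R B A') q
  sum_closed : ∀ {A B C A' B' C' : Type v}
    [AddCommGroup A] [Module R A] [AddCommGroup B] [Module R B]
    [AddCommGroup C] [Module R C] [AddCommGroup A'] [Module R A']
    [AddCommGroup B'] [Module R B'] [AddCommGroup C'] [Module R C']
    (f : A →ₗ[R] B) (g : B →ₗ[R] C) (f' : A' →ₗ[R] B') (g' : B' →ₗ[R] C'),
    FExact f g → FExact f' g' →
    FExact (LinearMap.prodMap f f') (LinearMap.prodMap g g')

variable {R}

/-- `P` is `F`-projective: `Hom(P,-)` sends `F`-exact sequences to exact sequences. -/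
def ExtSubfunctor.FProj (F : ExtSubfunctor.{v} R) (P : ModuleCat.{v} R) : Prop :=
  ∀ {B C : Type v} [AddCommGroup B] [Module R B] [AddCommGroup C] [Module R C]
    {A : Type v} [AddCommGroup A] [Module R A] (f : A →ₗ[R] B) (g : B →ₗ[R] C),
    F.FExact f g → ∀ φ : ↥P →ₗ[R] C, ∃ ψ : ↥P →ₗ[R] B, g ∘ₗ ψ = φ

/-- `I` is `F`-injective: `Hom(-,I)` sends `F`-exact sequences to exact sequences. -/
def ExtSubfunctor.FInj (F : ExtSubfunctor.{v} R) (I : ModuleCat.{v} R) : Prop :=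
  ∀ {A B C : Type v} [AddCommGroup A] [Module R A] [AddCommGroup B] [Module R B]
    [AddCommGroup C] [Module R C] (f : A →ₗ[R] B) (g : B →ₗ[R] C),
    F.FExact f g → ∀ φ : A →ₗ[R] ↥I, ∃ ψ : B →ₗ[R] ↥I, ψ ∘ₗ f = φ

/-- `F` has enough projectives. -/
def ExtSubfunctor.EnoughProjectives (F : ExtSubfunctor.{v} R) : Prop :=
  ∀ M : ModuleCat.{v} R, ∃ (K P : ModuleCat.{v} R) (i : ↥K →ₗ[R] ↥P) (p : ↥P →ₗ[R] ↥M),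
    F.FProj P ∧ F.FExact i p

/-- `F` has enough injectives. -/
def ExtSubfunctor.EnoughInjectives (F : ExtSubfunctor.{v} R) : Prop :=
  ∀ M : ModuleCat.{v} R, ∃ (I C : ModuleCat.{v} R) (i : ↥M →ₗ[R] ↥I) (p : ↥I →ₗ[R] ↥C),
    F.FInj I ∧ F.FExact i p

end Subfunctor


section Aux

variable {R : Type u} [Ring R]

/-- Factor a map through a surjection whose kernel it kills. -/
theorem stmt4_factorSurj {P M I : Type v} [AddCommGroup P] [Module R P]
    [AddCommGroup M] [Module R M] [AddCommGroup I] [Module R I]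
    (p : P →ₗ[R] M) (hp : Function.Surjective p) (φ : P →ₗ[R] I)
    (h : LinearMap.ker p ≤ LinearMap.ker φ) : ∃ χ : M →ₗ[R] I, χ ∘ₗ p = φ := by
  let e := p.quotKerEquivOfSurjective hp
  refine ⟨((LinearMap.ker p).liftQ φ h).comp e.symm.toLinearMap, ?_⟩
  ext x
  have h1 : e (Submodule.Quotient.mk x) = p x := rfl
  have h2 : e.symm (p x) = Submodule.Quotient.mk x := by
    rw [← h1, e.symm_apply_apply]
  simp [LinearMap.comp_apply, h2]

/-- Factor a map through an injection containing its range. -/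
theorem stmt4_factorInj {A B Q : Type v} [AddCommGroup A] [Module R A]
    [AddCommGroup B] [Module R B] [AddCommGroup Q] [Module R Q]
    (f : A →ₗ[R] B) (hf : Function.Injective f) (φ : Q →ₗ[R] B)
    (h : ∀ x, φ x ∈ LinearMap.range f) : ∃ χ : Q →ₗ[R] A, f ∘ₗ χ = φ := by
  let e := LinearEquiv.ofInjective f hf
  refine ⟨e.symm.toLinearMap ∘ₗ φ.codRestrict (LinearMap.range f) h, ?_⟩
  ext x
  show f (e.symm ⟨φ x, h x⟩) = φ x
  calc f (e.symm ⟨φ x, h x⟩) = ((e (e.symm ⟨φ x, h x⟩) : LinearMap.range f) : B) :=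
        (LinearEquiv.ofInjective_apply f _).symm
    _ = φ x := by rw [e.apply_symm_apply]

/-- One step of an `F`-projective presentation, packaged as data. -/
def ProjStepData (F : ExtSubfunctor.{v} R) (N : ModuleCat.{v} R) : Type _ :=
  Σ' (K P : ModuleCat.{v} R) (i : ↥K →ₗ[R] ↥P) (p : ↥P →ₗ[R] ↥N),
    F.FProj P ∧ F.FExact i p

noncomputable def projStep (F : ExtSubfunctor.{v} R) (h : F.EnoughProjectives)
    (N : ModuleCat.{v} R) : ProjStepData F N :=
  Classical.choice <| by
    obtain ⟨K, P, i, p, h1, h2⟩ := h N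
    exact ⟨⟨K, P, i, p, h1, h2⟩⟩

noncomputable def projMseq (F : ExtSubfunctor.{v} R) (h : F.EnoughProjectives)
    (M : ModuleCat.{v} R) : ℕ → ModuleCat.{v} R :=
  fun n => Nat.rec M (fun _ prev => (projStep F h prev).1) n

/-- One step of an `F`-injective copresentation, packaged as data. -/
def InjStepData (F : ExtSubfunctor.{v} R) (N : ModuleCat.{v} R) : Type _ :=
  Σ' (I C : ModuleCat.{v} R) (j : ↥N →ₗ[R] ↥I) (q : ↥I →ₗ[R] ↥C),
    F.FInj I ∧ F.FExact j q

noncomputable def injStep (F : ExtSubfunctor.{v} R) (h : F.EnoughInjectives)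
    (N : ModuleCat.{v} R) : InjStepData F N :=
  Classical.choice <| by
    obtain ⟨I, C, j, q, h1, h2⟩ := h N
    exact ⟨⟨I, C, j, q, h1, h2⟩⟩

noncomputable def injMseq (F : ExtSubfunctor.{v} R) (h : F.EnoughInjectives)
    (M : ModuleCat.{v} R) : ℕ → ModuleCat.{v} R :=
  fun n => Nat.rec M (fun _ prev => (injStep F h prev).2.1) n

end Aux

set_option maxHeartbeats 1000000 in
/-- Let `F` be an additive subfunctor of `Ext¹_Λ(-,-)` with enough
projectives and enough injectives.  Then `(𝒫(F), ℐ(F))` is an admissible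
`Hom`-balanced pair: `𝒫(F)`-precovers are surjective, `ℐ(F)`-preenvelopes are
injective, every module has a `Hom(-,ℐ(F))`-exact left `𝒫(F)`-resolution, and every
module has a `Hom(𝒫(F),-)`-exact right `ℐ(F)`-resolution. -/
theorem stmt4 {R : Type u} [Ring R] (F : ExtSubfunctor.{v} R)
    (hproj : F.EnoughProjectives) (hinj : F.EnoughInjectives) :
    (∀ (M P : ModuleCat.{v} R) (p : ↥P →ₗ[R] ↥M), F.FProj P →
      (∀ P' : ModuleCat.{v} R, F.FProj P' → ∀ h : ↥P' →ₗ[R] ↥M,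
        ∃ k : ↥P' →ₗ[R] ↥P, p ∘ₗ k = h) →
      Function.Surjective p) ∧
    (∀ (M I : ModuleCat.{v} R) (j : ↥M →ₗ[R] ↥I), F.FInj I →
      (∀ I' : ModuleCat.{v} R, F.FInj I' → ∀ h : ↥M →ₗ[R] ↥I',
        ∃ k : ↥I →ₗ[R] ↥I', k ∘ₗ j = h) →
      Function.Injective j) ∧
    (∀ M : ModuleCat.{v} R, ∃ res : LeftResolution {P | F.FProj P} M,
      res.IsHomXExact {P | F.FProj P} ∧ res.IsHomYExact {I | F.FInj I}) ∧
    (∀ M : ModuleCat.{v} R, ∃ res : RightResolution {I | F.FInj I} M,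
      res.IsHomYExact {I | F.FInj I} ∧ res.IsHomXExact {P | F.FProj P}) := by
  refine ⟨?_, ?_, ?_, ?_⟩
  · -- precovers are surjective
    intro M P p hP hpre
    obtain ⟨K, P', i', p', hP', hex⟩ := hproj M
    obtain ⟨k, hk⟩ := hpre P' hP' p'
    intro m
    obtain ⟨x, hx⟩ := (F.ses i' p' hex).2.1 m
    refine ⟨k x, ?_⟩
    have := LinearMap.congr_fun hk x
    simp only [LinearMap.comp_apply] at this
    rw [this, hx]
  · -- preenvelopes are injective
    intro M I j hI hpre
    obtain ⟨I', C, i', q', hI', hex⟩ := hinj M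
    obtain ⟨k, hk⟩ := hpre I' hI' i'
    intro a b hab
    apply (F.ses i' q' hex).1
    have ha := LinearMap.congr_fun hk a
    have hb := LinearMap.congr_fun hk b
    simp only [LinearMap.comp_apply] at ha hb
    rw [← ha, ← hb, hab]
  · -- left 𝒫(F)-resolutions
    intro M
    let Ms : ℕ → ModuleCat.{v} R := projMseq F hproj M
    let Pc : ℕ → ModuleCat.{v} R := fun n => (projStep F hproj (Ms n)).2.1
    let ic : ∀ n, ↥(Ms (n + 1)) →ₗ[R] ↥(Pc n) := fun n => (projStep F hproj (Ms n)).2.2.1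
    let pc : ∀ n, ↥(Pc n) →ₗ[R] ↥(Ms n) := fun n => (projStep F hproj (Ms n)).2.2.2.1
    have hFP : ∀ n, F.FProj (Pc n) := fun n => (projStep F hproj (Ms n)).2.2.2.2.1
    have hFE : ∀ n, F.FExact (ic n) (pc n) := fun n => (projStep F hproj (Ms n)).2.2.2.2.2
    have hses : ∀ n, IsSES (ic n) (pc n) := fun n => F.ses _ _ (hFE n)
    have hkey : ∀ n x, pc n (ic n x) = 0 := by
      intro n x
      have := LinearMap.mem_range_self (ic n) x
      rw [(hses n).2.2] at this
      exact this
    refine ⟨⟨Pc, hFP, pc 0, fun n => ic n ∘ₗ pc (n + 1), ?_, ?_⟩, ?_, ?_⟩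
    · ext x
      simp only [LinearMap.comp_apply, LinearMap.zero_apply]
      exact hkey 0 _
    · intro n
      ext x
      simp only [LinearMap.comp_apply, LinearMap.zero_apply]
      rw [hkey (n + 1), map_zero]
    · -- Hom(𝒳,-)-exactness
      intro Q hQ
      have hQ' : F.FProj Q := hQ
      refine ⟨fun φ => hQ' _ _ (hFE 0) φ, ?_, ?_⟩
      · intro φ hφ
        have hmem : ∀ x, φ x ∈ LinearMap.range (ic 0) := by
          intro x
          rw [(hses 0).2.2]
          have := LinearMap.congr_fun hφ x
          exact this
        obtain ⟨φ', hφ'⟩ := stmt4_factorInj (ic 0) (hses 0).1 φ hmem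
        obtain ⟨ψ, hψ⟩ := hQ' _ _ (hFE 1) φ'
        refine ⟨ψ, ?_⟩
        ext x
        have h1 := LinearMap.congr_fun hψ x
        have h2 := LinearMap.congr_fun hφ' x
        simp only [LinearMap.comp_apply] at h1 h2 ⊢
        rw [h1, h2]
      · intro n φ hφ
        have hz : ∀ x, pc (n + 1) (φ x) = 0 := by
          intro x
          apply (hses n).1
          rw [map_zero]
          have := LinearMap.congr_fun hφ x
          simpa using this
        have hmem : ∀ x, φ x ∈ LinearMap.range (ic (n + 1)) := by
          intro x
          rw [(hses (n + 1)).2.2]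
          exact LinearMap.mem_ker.mpr (hz x)
        obtain ⟨φ', hφ'⟩ := stmt4_factorInj (ic (n + 1)) (hses (n + 1)).1 φ hmem
        obtain ⟨ψ, hψ⟩ := hQ' _ _ (hFE (n + 2)) φ'
        refine ⟨ψ, ?_⟩
        ext x
        have h1 := LinearMap.congr_fun hψ x
        have h2 := LinearMap.congr_fun hφ' x
        simp only [LinearMap.comp_apply] at h1 h2 ⊢
        rw [h1, h2]
    · -- Hom(-,𝒴)-exactness
      intro I hI
      have hI' : F.FInj I := hI
      refine ⟨?_, ?_, ?_⟩
      · intro χ hχ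
        ext m
        obtain ⟨x, hx⟩ := (hses 0).2.1 m
        have := LinearMap.congr_fun hχ x
        simp only [LinearMap.comp_apply, LinearMap.zero_apply] at this ⊢
        rw [← hx]
        exact this
      · intro φ hφ
        have hker : LinearMap.ker (pc 0) ≤ LinearMap.ker φ := by
          rw [← (hses 0).2.2]
          rintro _ ⟨k, rfl⟩
          obtain ⟨y, hy⟩ := (hses 1).2.1 k
          have := LinearMap.congr_fun hφ y
          simp only [LinearMap.comp_apply, LinearMap.zero_apply] at this
          rw [LinearMap.mem_ker, ← hy]
          exact this
        exact stmt4_factorSurj (pc 0) (hses 0).2.1 φ hker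
      · intro n φ hφ
        have hker : LinearMap.ker (pc (n + 1)) ≤ LinearMap.ker φ := by
          rw [← (hses (n + 1)).2.2]
          rintro _ ⟨k, rfl⟩
          obtain ⟨y, hy⟩ := (hses (n + 2)).2.1 k
          have := LinearMap.congr_fun hφ y
          simp only [LinearMap.comp_apply, LinearMap.zero_apply] at this
          rw [LinearMap.mem_ker, ← hy]
          exact this
        obtain ⟨θ, hθ⟩ := stmt4_factorSurj (pc (n + 1)) (hses (n + 1)).2.1 φ hker
        obtain ⟨ψ, hψ⟩ := hI' _ _ (hFE n) θ
        refine ⟨ψ, ?_⟩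
        ext x
        have h1 := LinearMap.congr_fun hψ (pc (n + 1) x)
        have h2 := LinearMap.congr_fun hθ x
        simp only [LinearMap.comp_apply] at h1 h2 ⊢
        rw [h1, h2]
  · -- right ℐ(F)-resolutions
    intro M
    let Ms : ℕ → ModuleCat.{v} R := injMseq F hinj M
    let Ic : ℕ → ModuleCat.{v} R := fun n => (injStep F hinj (Ms n)).1
    let jc : ∀ n, ↥(Ms n) →ₗ[R] ↥(Ic n) := fun n => (injStep F hinj (Ms n)).2.2.1
    let qc : ∀ n, ↥(Ic n) →ₗ[R] ↥(Ms (n + 1)) := fun n => (injStep F hinj (Ms n)).2.2.2.1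
    have hFI : ∀ n, F.FInj (Ic n) := fun n => (injStep F hinj (Ms n)).2.2.2.2.1
    have hFE : ∀ n, F.FExact (jc n) (qc n) := fun n => (injStep F hinj (Ms n)).2.2.2.2.2
    have hses : ∀ n, IsSES (jc n) (qc n) := fun n => F.ses _ _ (hFE n)
    have hkey : ∀ n x, qc n (jc n x) = 0 := by
      intro n x
      have := LinearMap.mem_range_self (jc n) x
      rw [(hses n).2.2] at this
      exact this
    refine ⟨⟨Ic, hFI, jc 0, fun n => jc (n + 1) ∘ₗ qc n, ?_, ?_⟩, ?_, ?_⟩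
    · ext x
      simp only [LinearMap.comp_apply, LinearMap.zero_apply]
      exact (congrArg (jc 1) (hkey 0 x)).trans (map_zero _)
    · intro n
      ext x
      simp only [LinearMap.comp_apply, LinearMap.zero_apply]
      rw [hkey (n + 1), map_zero]
    · -- Hom(-,𝒴)-exactness
      intro I hI
      have hI' : F.FInj I := hI
      refine ⟨fun φ => hI' _ _ (hFE 0) φ, ?_, ?_⟩
      · intro φ hφ
        have hker : LinearMap.ker (qc 0) ≤ LinearMap.ker φ := by
          rw [← (hses 0).2.2]
          rintro _ ⟨k, rfl⟩
          have := LinearMap.congr_fun hφ k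
          exact this
        obtain ⟨θ, hθ⟩ := stmt4_factorSurj (qc 0) (hses 0).2.1 φ hker
        obtain ⟨ψ, hψ⟩ := hI' _ _ (hFE 1) θ
        refine ⟨ψ, ?_⟩
        ext x
        have h1 := LinearMap.congr_fun hψ (qc 0 x)
        have h2 := LinearMap.congr_fun hθ x
        simp only [LinearMap.comp_apply] at h1 h2 ⊢
        rw [h1, h2]
      · intro n φ hφ
        have hz : ∀ k, φ (jc (n + 1) k) = 0 := by
          intro k
          obtain ⟨x, hx⟩ := (hses n).2.1 k
          have := LinearMap.congr_fun hφ x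
          simp only [LinearMap.comp_apply, LinearMap.zero_apply] at this
          rw [← hx]
          exact this
        have hker : LinearMap.ker (qc (n + 1)) ≤ LinearMap.ker φ := by
          rw [← (hses (n + 1)).2.2]
          rintro _ ⟨k, rfl⟩
          exact LinearMap.mem_ker.mpr (hz k)
        obtain ⟨θ, hθ⟩ := stmt4_factorSurj (qc (n + 1)) (hses (n + 1)).2.1 φ hker
        obtain ⟨ψ, hψ⟩ := hI' _ _ (hFE (n + 2)) θ
        refine ⟨ψ, ?_⟩
        ext x
        have h1 := LinearMap.congr_fun hψ (qc (n + 1) x)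
        have h2 := LinearMap.congr_fun hθ x
        simp only [LinearMap.comp_apply] at h1 h2 ⊢
        rw [h1, h2]
    · -- Hom(𝒳,-)-exactness
      intro Q hQ
      have hQ' : F.FProj Q := hQ
      refine ⟨?_, ?_, ?_⟩
      · intro χ hχ
        ext x
        apply (hses 0).1
        simp only [LinearMap.zero_apply, map_zero]
        have := LinearMap.congr_fun hχ x
        exact this.trans (map_zero _).symm
      · intro φ hφ
        have hmem : ∀ x, φ x ∈ LinearMap.range (jc 0) := by
          intro x
          rw [(hses 0).2.2]
          apply LinearMap.mem_ker.mpr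
          apply (hses 1).1
          have := LinearMap.congr_fun hφ x
          simp only [LinearMap.comp_apply, LinearMap.zero_apply] at this
          exact this.trans (map_zero _).symm
        exact stmt4_factorInj (jc 0) (hses 0).1 φ hmem
      · intro n φ hφ
        have hmem : ∀ x, φ x ∈ LinearMap.range (jc (n + 1)) := by
          intro x
          rw [(hses (n + 1)).2.2]
          apply LinearMap.mem_ker.mpr
          apply (hses (n + 2)).1
          have := LinearMap.congr_fun hφ x
          simp only [LinearMap.comp_apply, LinearMap.zero_apply] at this
          exact this.trans (map_zero _).symm
        obtain ⟨θ, hθ⟩ := stmt4_factorInj (jc (n + 1)) (hses (n + 1)).1 φ hmem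
        obtain ⟨ψ, hψ⟩ := hQ' _ _ (hFE n) θ
        refine ⟨ψ, ?_⟩
        ext x
        have h1 := LinearMap.congr_fun hψ x
        have h2 := LinearMap.congr_fun hθ x
        simp only [LinearMap.comp_apply] at h1 h2 ⊢
        rw [h1, h2]
end

section
/- Relative Eklof Lemma: Let 𝔅 = (𝒳, 𝒴) be an admissible Hom-balanced pair in Mod(Λ), 𝒞 a class of Λ-modules, and M a Λ-module admitting a 𝔅-proper filtration {M_α}_{α ≤ κ} such that each consecutive quotient M_{α+1}/M_α lies in the left Ext_𝔅-orthogonal class ⊥𝔅𝒞 = {N : Ext¹_𝔅(N, C) = 0 for all C ∈ 𝒞}. Then M ∈ ⊥𝔅𝒞, i.e., Ext¹_𝔅(M, C) = 0 for all C ∈ 𝒞. -/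
universe v u

open Function LinearMap

section BalancedPair

variable {R : Type u} [Ring R]

/-- A short exact sequence which is both `Hom(𝒳,-)`-exact and `Hom(-,𝒴)`-exact,
i.e. a `𝔅`-exact sequence for the pair `𝔅 = (𝒳,𝒴)`. -/
def IsBExactSES (𝒳 𝒴 : Set (ModuleCat.{v} R)) {A B C : Type v}
    [AddCommGroup A] [Module R A] [AddCommGroup B] [Module R B]
    [AddCommGroup C] [Module R C] (f : A →ₗ[R] B) (g : B →ₗ[R] C) : Prop :=
  IsSES f g ∧ HomFromExact 𝒳 g ∧ HomIntoExact 𝒴 f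

/-- An admissible `Hom`-balanced pair `(𝒳,𝒴)`: `𝒳` is precovering with surjective
precovers, `𝒴` is preenveloping with injective preenvelopes, and `Hom` is balanced by
the pair: a short exact sequence is `Hom(𝒳,-)`-exact iff it is `Hom(-,𝒴)`-exact. -/
structure IsAdmissibleBalancedPair (𝒳 𝒴 : Set (ModuleCat.{v} R)) : Prop where
  precovering : ∀ M : ModuleCat.{v} R, ∃ X ∈ 𝒳, ∃ p : ↥X →ₗ[R] ↥M,
    Function.Surjective p ∧ ∀ X' ∈ 𝒳, ∀ h : ↥X' →ₗ[R] ↥M, ∃ k : ↥X' →ₗ[R] ↥X, p ∘ₗ k = h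
  preenveloping : ∀ M : ModuleCat.{v} R, ∃ Y ∈ 𝒴, ∃ j : ↥M →ₗ[R] ↥Y,
    Function.Injective j ∧ ∀ Y' ∈ 𝒴, ∀ h : ↥M →ₗ[R] ↥Y', ∃ k : ↥Y →ₗ[R] ↥Y', k ∘ₗ j = h
  balanced : ∀ {A B C : Type v} [AddCommGroup A] [Module R A] [AddCommGroup B] [Module R B]
    [AddCommGroup C] [Module R C] (f : A →ₗ[R] B) (g : B →ₗ[R] C),
    IsSES f g → (HomFromExact 𝒳 g ↔ HomIntoExact 𝒴 f)

/-- Vanishing of the relative Ext group `Ext¹_𝔅(M,N)`: every `𝔅`-exact extension of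
`N` by `M` splits. -/
def Ext1Vanish (𝒳 𝒴 : Set (ModuleCat.{v} R)) (M N : ModuleCat.{v} R) : Prop :=
  ∀ (E : ModuleCat.{v} R) (i : ↥N →ₗ[R] ↥E) (p : ↥E →ₗ[R] ↥M),
    IsBExactSES 𝒳 𝒴 i p → ∃ r : ↥E →ₗ[R] ↥N, r ∘ₗ i = LinearMap.id

/-- Vanishing of the relative Ext group `Extⁿ_𝔅(M,N)` for `n ≥ 1`, defined by dimension
shifting along `𝔅`-exact cosyzygy sequences `0 → N → Y → C → 0` with `Y ∈ 𝒴`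
(by convention `Ext⁰` vanishing is `True`; it is not used). -/
def ExtVanish (𝒳 𝒴 : Set (ModuleCat.{v} R)) : ℕ → ModuleCat.{v} R → ModuleCat.{v} R → Prop
  | 0, _, _ => True
  | 1, M, N => Ext1Vanish 𝒳 𝒴 M N
  | (n+2), M, N => ∀ (Y C : ModuleCat.{v} R) (i : ↥N →ₗ[R] ↥Y) (p : ↥Y →ₗ[R] ↥C),
      Y ∈ 𝒴 → IsBExactSES 𝒳 𝒴 i p → ExtVanish 𝒳 𝒴 (n+1) M C

/-- The right `Ext_𝔅`-orthogonal class of `𝒞`. -/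
def rightPerp (𝒳 𝒴 𝒞 : Set (ModuleCat.{v} R)) : Set (ModuleCat.{v} R) :=
  {M | ∀ C ∈ 𝒞, Ext1Vanish 𝒳 𝒴 C M}

/-- The left `Ext_𝔅`-orthogonal class of `𝒞`. -/
def leftPerp (𝒳 𝒴 𝒞 : Set (ModuleCat.{v} R)) : Set (ModuleCat.{v} R) :=
  {M | ∀ C ∈ 𝒞, Ext1Vanish 𝒳 𝒴 M C}

/-- The class `T^{⊥𝔅∞}` of modules `M` with `Extⁿ_𝔅(T,M) = 0` for all `n ≥ 1`. -/
def rightPerpInf (𝒳 𝒴 : Set (ModuleCat.{v} R)) (T : ModuleCat.{v} R) :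
    Set (ModuleCat.{v} R) :=
  {M | ∀ n : ℕ, 1 ≤ n → ExtVanish 𝒳 𝒴 n T M}

/-- `(ℒ,ℛ)` is a `𝔅`-cotorsion pair. -/
def IsBCotorsionPair (𝒳 𝒴 ℒ ℛ : Set (ModuleCat.{v} R)) : Prop :=
  rightPerp 𝒳 𝒴 ℒ = ℛ ∧ leftPerp 𝒳 𝒴 ℛ = ℒ

/-- `ℒ` is `𝔅`-special precovering with kernels in `ℛ`: every module `M` admits a
`𝔅`-exact sequence `0 → R → L → M → 0` with `L ∈ ℒ` and `R ∈ ℛ`. -/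
def BSpecialPrecovering (𝒳 𝒴 ℒ ℛ : Set (ModuleCat.{v} R)) : Prop :=
  ∀ M : ModuleCat.{v} R, ∃ Rm ∈ ℛ, ∃ L ∈ ℒ, ∃ (i : ↥Rm →ₗ[R] ↥L) (p : ↥L →ₗ[R] ↥M),
    IsBExactSES 𝒳 𝒴 i p

/-- `ℛ` is `𝔅`-special preenveloping with cokernels in `ℒ`: every module `M` admits a
`𝔅`-exact sequence `0 → M → R → L → 0` with `R ∈ ℛ` and `L ∈ ℒ`. -/
def BSpecialPreenveloping (𝒳 𝒴 ℒ ℛ : Set (ModuleCat.{v} R)) : Prop :=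
  ∀ M : ModuleCat.{v} R, ∃ Rm ∈ ℛ, ∃ L ∈ ℒ, ∃ (i : ↥M →ₗ[R] ↥Rm) (p : ↥Rm →ₗ[R] ↥L),
    IsBExactSES 𝒳 𝒴 i p

/-- `𝒞` is `𝔅`-resolving. -/
def BResolving (𝒳 𝒴 𝒞 : Set (ModuleCat.{v} R)) : Prop :=
  𝒳 ⊆ 𝒞 ∧ ∀ (A B C : ModuleCat.{v} R) (f : ↥A →ₗ[R] ↥B) (g : ↥B →ₗ[R] ↥C),
    IsBExactSES 𝒳 𝒴 f g → C ∈ 𝒞 → (A ∈ 𝒞 ↔ B ∈ 𝒞)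

/-- `𝒞` is `𝔅`-coresolving. -/
def BCoresolving (𝒳 𝒴 𝒞 : Set (ModuleCat.{v} R)) : Prop :=
  𝒴 ⊆ 𝒞 ∧ ∀ (A B C : ModuleCat.{v} R) (f : ↥A →ₗ[R] ↥B) (g : ↥B →ₗ[R] ↥C),
    IsBExactSES 𝒳 𝒴 f g → A ∈ 𝒞 → (B ∈ 𝒞 ↔ C ∈ 𝒞)

/-- `M` is `𝔅`-properly `𝒞`-filtered: it has a continuous chain of submodules, starting
at `0` and ending at `M`, with `𝔅`-exact consecutive-quotient sequences and consecutive
quotients isomorphic to members of `𝒞`. -/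
def IsBProperlyFiltered (𝒳 𝒴 𝒞 : Set (ModuleCat.{v} R)) (M : ModuleCat.{v} R) : Prop :=
  ∃ (κ : Ordinal.{v}) (F : Ordinal.{v} → Submodule R ↥M),
    F 0 = ⊥ ∧ F κ = ⊤ ∧ (∀ α β : Ordinal.{v}, α ≤ β → F α ≤ F β) ∧
    (∀ α ≤ κ, Order.IsSuccLimit α → F α = ⨆ (β : Ordinal.{v}) (_ : β < α), F β) ∧
    ∀ α < κ, ∃ h : F α ≤ F (α + 1),
      IsBExactSES 𝒳 𝒴 (Submodule.inclusion h)
        ((Submodule.comap (F (α + 1)).subtype (F α)).mkQ) ∧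
      ∃ C ∈ 𝒞,
        Nonempty ((↥(F (α + 1)) ⧸ Submodule.comap (F (α + 1)).subtype (F α)) ≃ₗ[R] ↥C)

end BalancedPair

private lemma glue_sections {R : Type u} [Ring R] {E M : Type v}
    [AddCommGroup E] [Module R E] [AddCommGroup M] [Module R M]
    (p : E →ₗ[R] M) {ι : Type*} [Nonempty ι]
    (F : ι → Submodule R M) (dir : ∀ i j : ι, ∃ k, F i ≤ F k ∧ F j ≤ F k)
    (s : ∀ i, ↥(F i) →ₗ[R] E)
    (hsec : ∀ i x, p (s i x) = ↑x)
    (hcomp : ∀ i j, F i ≤ F j → ∀ (x : M) (hi : x ∈ F i) (hj : x ∈ F j),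
      s j ⟨x, hj⟩ = s i ⟨x, hi⟩)
    (G : Submodule R M) (hle : ∀ i, F i ≤ G)
    (hG : ∀ x ∈ G, ∃ i, x ∈ F i) :
    ∃ t : ↥G →ₗ[R] E, (∀ x, p (t x) = ↑x) ∧
      ∀ (i) (x : M) (hi : x ∈ F i) (hx : x ∈ G), t ⟨x, hx⟩ = s i ⟨x, hi⟩ := by
  have hmem : ∀ x : ↥G, ∃ i, (x : M) ∈ F i := fun x => hG x x.2
  choose idx hidx using hmem
  have key : ∀ (x : ↥G) (j) (hj : (x : M) ∈ F j), s (idx x) ⟨x, hidx x⟩ = s j ⟨x, hj⟩ := by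
    intro x j hj
    obtain ⟨k, h1, h2⟩ := dir (idx x) j
    rw [← hcomp (idx x) k h1 x (hidx x) (h1 (hidx x)), ← hcomp j k h2 x hj (h2 hj)]
  refine ⟨⟨⟨fun x => s (idx x) ⟨x, hidx x⟩, ?_⟩, ?_⟩, ?_, ?_⟩
  · intro x y
    obtain ⟨k, hk1, hk2⟩ := dir (idx x) (idx y)
    obtain ⟨k', h3, h4⟩ := dir (idx (x + y)) k
    rw [key (x + y) k' (h3 (hidx (x + y))), key x k' (h4 (hk1 (hidx x))),
      key y k' (h4 (hk2 (hidx y)))]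
    have : (⟨(↑(x + y) : M), h3 (hidx (x + y))⟩ : ↥(F k')) =
        ⟨↑x, h4 (hk1 (hidx x))⟩ + ⟨↑y, h4 (hk2 (hidx y))⟩ := rfl
    rw [this, map_add]
  · intro c x
    dsimp only
    rw [key (c • x) (idx x) (F (idx x) |>.smul_mem c (hidx x))]
    have : (⟨(↑(c • x) : M), (F (idx x)).smul_mem c (hidx x)⟩ : ↥(F (idx x))) =
        c • ⟨↑x, hidx x⟩ := rfl
    rw [this, map_smul]
    rfl
  · intro x
    exact hsec (idx x) _
  · intro i x hi hx
    exact key ⟨x, hx⟩ i hi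


private lemma extend_section {R : Type u} [Ring R] (𝒳 𝒴 : Set (ModuleCat.{v} R))
    (hbal : ∀ {A B C : Type v} [AddCommGroup A] [Module R A] [AddCommGroup B] [Module R B]
      [AddCommGroup C] [Module R C] (f : A →ₗ[R] B) (g : B →ₗ[R] C),
      IsSES f g → (HomFromExact 𝒳 g ↔ HomIntoExact 𝒴 f))
    {C E M : ModuleCat.{v} R} (i : ↥C →ₗ[R] ↥E) (p : ↥E →ₗ[R] ↥M)
    (hi : Function.Injective i) (hp : Function.Surjective p)
    (hrange : LinearMap.range i = LinearMap.ker p)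
    (hXp : HomFromExact 𝒳 p)
    (B A : Submodule R ↥M) (hBA : B ≤ A)
    (hstepX : HomFromExact 𝒳 ((Submodule.comap A.subtype B).mkQ))
    (C' : ModuleCat.{v} R) (hC' : Ext1Vanish 𝒳 𝒴 C' C)
    (e : ((↥A) ⧸ (Submodule.comap A.subtype B)) ≃ₗ[R] ↥C')
    (s : ↥B →ₗ[R] ↥E) (hs : ∀ x, p (s x) = ↑x) :
    ∃ t : ↥A →ₗ[R] ↥E, (∀ x, p (t x) = ↑x) ∧
      ∀ (x : ↥M) (hB : x ∈ B) (hA : x ∈ A), t ⟨x, hA⟩ = s ⟨x, hB⟩ := by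
  classical
  have hpi : ∀ c, p (i c) = 0 := by
    intro c
    have : i c ∈ LinearMap.ker p := hrange ▸ LinearMap.mem_range_self i c
    exact this
  set E₁ : Submodule R ↥E := Submodule.comap p A with hE₁
  have hiE₁ : ∀ c, i c ∈ E₁ := fun c => by
    simp only [hE₁, Submodule.mem_comap, hpi]; exact A.zero_mem
  have hsE₁ : ∀ x : ↥B, s x ∈ E₁ := fun x => by
    simp only [hE₁, Submodule.mem_comap, hs]; exact hBA x.2
  set i' : ↥C →ₗ[R] ↥E₁ := i.codRestrict E₁ hiE₁ with hi'
  set s' : ↥B →ₗ[R] ↥E₁ := s.codRestrict E₁ hsE₁ with hs'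
  set N : Submodule R ↥E₁ := LinearMap.range s' with hN
  set π : ↥E₁ →ₗ[R] (↥E₁ ⧸ N) := N.mkQ with hπ
  set B' : Submodule R ↥A := Submodule.comap A.subtype B with hB'
  set p₁ : ↥E₁ →ₗ[R] ↥A := (p.comp E₁.subtype).codRestrict A (fun x => x.2) with hp₁
  set q₁ : ↥E₁ →ₗ[R] (↥A ⧸ B') := B'.mkQ ∘ₗ p₁ with hq₁
  have hNker : N ≤ LinearMap.ker q₁ := by
    rintro _ ⟨x, rfl⟩
    have hmem : p₁ (s' x) ∈ B' := by
      show p (s x) ∈ B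
      rw [hs]; exact x.2
    show B'.mkQ (p₁ (s' x)) = 0
    rwa [Submodule.mkQ_apply, Submodule.Quotient.mk_eq_zero]
  set pbar : (↥E₁ ⧸ N) →ₗ[R] (↥A ⧸ B') := N.liftQ q₁ hNker with hpbar
  set ibar : ↥C →ₗ[R] (↥E₁ ⧸ N) := π ∘ₗ i' with hibar
  have hibar_inj : Function.Injective ibar := by
    have h0 : ∀ c, ibar c = 0 → c = 0 := by
      intro c hc
      have : i' c ∈ N := by rwa [hibar, LinearMap.comp_apply, hπ, Submodule.mkQ_apply,
        Submodule.Quotient.mk_eq_zero] at hc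
      obtain ⟨x, hx⟩ := this
      have hcoe : s x = i c := congrArg Subtype.val hx
      have hx0 : (x : ↥M) = 0 := by rw [← hs x, hcoe, hpi]
      have : i c = 0 := by rw [← hcoe, show x = 0 from Subtype.ext hx0, map_zero]
      exact hi (by rw [this, map_zero])
    intro a b hab
    have := h0 (a - b) (by rw [map_sub, hab, sub_self])
    rwa [sub_eq_zero] at this
  have hpbar_surj : Function.Surjective pbar := by
    intro q
    obtain ⟨a, rfl⟩ := Submodule.mkQ_surjective B' q
    obtain ⟨e0, he0⟩ := hp ↑a
    have he1 : e0 ∈ E₁ := by simp only [hE₁, Submodule.mem_comap, he0]; exact a.2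
    refine ⟨π ⟨e0, he1⟩, ?_⟩
    show q₁ ⟨e0, he1⟩ = B'.mkQ a
    rw [hq₁, LinearMap.comp_apply]
    congr 1
    exact Subtype.ext he0
  have hrange2 : LinearMap.range ibar = LinearMap.ker pbar := by
    apply le_antisymm
    · rintro _ ⟨c, rfl⟩
      show pbar (π (i' c)) = 0
      have : p₁ (i' c) = 0 := Subtype.ext (hpi c)
      show q₁ (i' c) = 0
      rw [hq₁, LinearMap.comp_apply, this, map_zero]
    · rintro q hq
      obtain ⟨x, rfl⟩ := Submodule.mkQ_surjective N q
      have hx : q₁ x = 0 := hq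
      have hxB : p (x : ↥E₁) ∈ B := by
        have : p₁ x ∈ B' := by
          rwa [hq₁, LinearMap.comp_apply, Submodule.mkQ_apply,
            Submodule.Quotient.mk_eq_zero] at hx
        exact this
      set b : ↥B := ⟨p ↑x, hxB⟩ with hb
      have hker : (↑x - s b) ∈ LinearMap.ker p := by
        show p (↑x - s b) = 0
        rw [map_sub, hs b]
        exact sub_self _
      rw [← hrange] at hker
      obtain ⟨c, hc⟩ := hker
      refine ⟨c, ?_⟩
      show π (i' c) = N.mkQ x
      rw [hπ, Submodule.mkQ_apply, Submodule.mkQ_apply, Submodule.Quotient.eq]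
      refine ⟨-b, ?_⟩
      show s' (-b) = i' c - x
      apply Subtype.ext
      show s (-b) = i c - ↑x
      rw [map_neg, hc]
      abel
  have hsesQ : IsSES ibar pbar := ⟨hibar_inj, hpbar_surj, hrange2⟩
  have hfromQ : HomFromExact 𝒳 pbar := by
    intro X hXm φ
    obtain ⟨ψ, hψ⟩ := hstepX X hXm φ
    obtain ⟨χ, hχ⟩ := hXp X hXm (A.subtype ∘ₗ ψ)
    have hχA : ∀ x, χ x ∈ E₁ := by
      intro x
      show p (χ x) ∈ A
      have : p (χ x) = ↑(ψ x) := LinearMap.congr_fun hχ x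
      rw [this]; exact (ψ x).2
    refine ⟨π ∘ₗ χ.codRestrict E₁ hχA, ?_⟩
    ext x
    show pbar (π (χ.codRestrict E₁ hχA x)) = φ x
    show q₁ (χ.codRestrict E₁ hχA x) = φ x
    rw [hq₁, LinearMap.comp_apply]
    have h1 : p₁ (χ.codRestrict E₁ hχA x) = ψ x := by
      apply Subtype.ext
      show p (χ x) = ↑(ψ x)
      exact LinearMap.congr_fun hχ x
    rw [h1]
    exact LinearMap.congr_fun hψ x
  have hintoQ : HomIntoExact 𝒴 ibar := (hbal ibar pbar hsesQ).mp hfromQ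
  -- transport along e
  set pbar' : (↥E₁ ⧸ N) →ₗ[R] ↥C' := e.toLinearMap ∘ₗ pbar with hpbar'
  have hses' : IsSES ibar pbar' := by
    refine ⟨hibar_inj, e.surjective.comp hpbar_surj, ?_⟩
    rw [hrange2]
    ext q
    simp [hpbar', LinearMap.mem_ker, _root_.map_eq_zero_iff _ e.injective]
  have hfrom' : HomFromExact 𝒳 pbar' := by
    intro X hXm φ
    obtain ⟨ψ, hψ⟩ := hfromQ X hXm (e.symm.toLinearMap ∘ₗ φ)
    refine ⟨ψ, ?_⟩
    ext x
    have := LinearMap.congr_fun hψ x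
    show e (pbar (ψ x)) = φ x
    rw [show pbar (ψ x) = e.symm (φ x) from this]
    simp
  have hinto' : HomIntoExact 𝒴 ibar := hintoQ
  obtain ⟨r, hr⟩ := hC' (ModuleCat.of R (↥E₁ ⧸ N)) ibar pbar' ⟨hses', hfrom', hinto'⟩
  have hri : ∀ c, r (ibar c) = c := fun c => LinearMap.congr_fun hr c
  -- build the extension
  set θ : ↥E₁ →ₗ[R] ↥E := E₁.subtype - (i ∘ₗ r ∘ₗ π) with hθ
  have hker : LinearMap.ker p₁ ≤ LinearMap.ker θ := by
    intro x hx
    have hx0 : p ↑x = 0 := congrArg Subtype.val hx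
    have : (↑x : ↥E) ∈ LinearMap.range i := by rw [hrange]; exact hx0
    obtain ⟨c, hc⟩ := this
    have hxe : x = i' c := Subtype.ext hc.symm
    show θ x = 0
    rw [hθ]
    simp only [LinearMap.sub_apply, LinearMap.comp_apply, Submodule.subtype_apply]
    rw [hxe]
    show (i' c : ↥E) - i (r (π (i' c))) = 0
    have : r (π (i' c)) = c := hri c
    rw [this]
    exact sub_self (i c)
  have hp₁surj : Function.Surjective p₁ := by
    intro a
    obtain ⟨e0, he0⟩ := hp ↑a
    have he1 : e0 ∈ E₁ := by simp only [hE₁, Submodule.mem_comap, he0]; exact a.2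
    exact ⟨⟨e0, he1⟩, Subtype.ext he0⟩
  set equiv := p₁.quotKerEquivOfSurjective hp₁surj with hequiv
  set θbar := (LinearMap.ker p₁).liftQ θ hker with hθbar
  set t : ↥A →ₗ[R] ↥E := θbar ∘ₗ equiv.symm.toLinearMap with ht
  have hteq : ∀ x : ↥E₁, t (p₁ x) = θ x := by
    intro x
    have h1 : equiv.symm (p₁ x) = Submodule.Quotient.mk x := by
      apply equiv.injective
      rw [LinearEquiv.apply_symm_apply]
      rfl
    rw [ht]
    show θbar (equiv.symm (p₁ x)) = θ x
    rw [h1]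
    rfl
  refine ⟨t, ?_, ?_⟩
  · intro a
    obtain ⟨x, rfl⟩ := hp₁surj a
    rw [hteq]
    have : p (θ x) = p ↑x := by
      rw [hθ]
      simp [LinearMap.sub_apply, hpi]
    rw [this]
    rfl
  · intro x hB hA
    have h1 : p₁ (s' ⟨x, hB⟩) = ⟨x, hA⟩ := Subtype.ext (hs ⟨x, hB⟩)
    rw [← h1, hteq]
    have h2 : π (s' ⟨x, hB⟩) = 0 := by
      rw [hπ, Submodule.mkQ_apply, Submodule.Quotient.mk_eq_zero]
      exact ⟨⟨x, hB⟩, rfl⟩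
    rw [hθ]
    show (s' ⟨x, hB⟩ : ↥E) - i (r (π (s' ⟨x, hB⟩))) = s ⟨x, hB⟩
    rw [h2, map_zero, map_zero, sub_zero]
    rfl

/-- Relative Eklof Lemma.  Let `𝔅 = (𝒳,𝒴)` be an admissible
`Hom`-balanced pair and `𝒞` a class of modules.  If `M` is `𝔅`-properly
`⊥𝔅𝒞`-filtered, then `M ∈ ⊥𝔅𝒞`, i.e. `Ext¹_𝔅(M,C) = 0` for all `C ∈ 𝒞`. -/

theorem stmt5 {R : Type u} [Ring R] (𝒳 𝒴 : Set (ModuleCat.{v} R))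
    (hB : IsAdmissibleBalancedPair 𝒳 𝒴) (𝒞 : Set (ModuleCat.{v} R))
    (M : ModuleCat.{v} R)
    (hfil : IsBProperlyFiltered 𝒳 𝒴 (leftPerp 𝒳 𝒴 𝒞) M) :
    M ∈ leftPerp 𝒳 𝒴 𝒞 := by
  classical
  obtain ⟨κ, F, hF0, hFκ, hmono, hlim, hstep⟩ := hfil
  intro C hC Eo i p hBex
  obtain ⟨⟨hi, hp, hrange⟩, hX, hY⟩ := hBex
  have hpi : ∀ c, p (i c) = 0 := by
    intro c
    have : i c ∈ LinearMap.ker p := hrange ▸ LinearMap.mem_range_self i c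
    exact this
  -- Partial sections of p over the filtration
  let T := {q : Σ α : Ordinal.{v}, (↥(F α) →ₗ[R] ↥Eo) //
    q.1 ≤ κ ∧ ∀ x : ↥(F q.1), p (q.2 x) = ↑x}
  let rel : T → T → Prop := fun a b => a.1.1 ≤ b.1.1 ∧
    ∀ (x : ↥M) (ha : x ∈ F a.1.1) (hb : x ∈ F b.1.1), b.1.2 ⟨x, hb⟩ = a.1.2 ⟨x, ha⟩
  have rtrans : ∀ {a b c : T}, rel a b → rel b c → rel a c := by
    rintro a b c ⟨h1, h2⟩ ⟨h3, h4⟩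
    refine ⟨h1.trans h3, fun x ha hc => ?_⟩
    have hbmem : x ∈ F b.1.1 := hmono _ _ h1 ha
    rw [h4 x hbmem hc, h2 x ha hbmem]
  have base : T := by
    refine ⟨⟨0, 0⟩, by simp, fun x => ?_⟩
    have hx0 : (x : ↥M) = 0 := (Submodule.mem_bot R).mp (hF0.le x.2)
    simp [hx0]
  have hub : ∀ c : Set T, IsChain rel c → ∃ ub, ∀ a ∈ c, rel a ub := by
    intro c hc
    rcases c.eq_empty_or_nonempty with rfl | hne
    · exact ⟨base, fun a ha => absurd ha (Set.notMem_empty a)⟩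
    by_cases hattain : ∃ m ∈ c, ∀ a ∈ c, a.1.1 ≤ m.1.1
    · obtain ⟨m, hm, hmax⟩ := hattain
      refine ⟨m, fun a ha => ?_⟩
      rcases eq_or_ne a m with rfl | hne'
      · exact ⟨le_refl _, fun x h1 h2 => rfl⟩
      rcases hc ha hm hne' with hab | hba
      · exact hab
      · exact ⟨hmax a ha, fun x ha' hm' => (hba.2 x hm' ha').symm⟩
    -- not attained: the sup of the chain is a limit ordinal
    · push_neg at hattain
      set S₀ : Set Ordinal.{v} := (fun a : T => a.1.1) '' c with hS₀
      have hne₀ : S₀.Nonempty := hne.image _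
      have hbdd : BddAbove S₀ := ⟨κ, by rintro _ ⟨a, ha, rfl⟩; exact a.2.1⟩
      set γ : Ordinal.{v} := sSup S₀ with hγ
      have hγκ : γ ≤ κ := csSup_le hne₀ (by rintro _ ⟨a, ha, rfl⟩; exact a.2.1)
      have hlt : ∀ a ∈ c, a.1.1 < γ := by
        intro a ha
        obtain ⟨b, hb, hab⟩ := hattain a ha
        exact lt_of_lt_of_le hab (le_csSup hbdd ⟨b, hb, rfl⟩)
      have hγlim : Order.IsSuccLimit γ := by
        rw [Ordinal.isSuccLimit_iff, Order.isSuccPrelimit_iff_succ_lt]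
        constructor
        · obtain ⟨a, ha⟩ := hne
          exact fun h0 => absurd (hlt a ha) (by rw [h0]; simp)
        · intro β hβ
          obtain ⟨_, ⟨a, ha, rfl⟩, hβa⟩ := exists_lt_of_lt_csSup hne₀ hβ
          rw [← Ordinal.add_one_eq_succ]
          exact lt_of_le_of_lt (Order.add_one_le_of_lt hβa) (hlt a ha)
      have hFγ : F γ = ⨆ (β : Ordinal.{v}) (_ : β < γ), F β := hlim γ hγκ hγlim
      -- glue the chain
      haveI : Nonempty (↥c) := hne.to_subtype
      set Fam : ↥c → Submodule R ↥M := fun a => F a.1.1.1 with hFam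
      have hdir : ∀ i' j' : ↥c, ∃ k, Fam i' ≤ Fam k ∧ Fam j' ≤ Fam k := by
        intro a b
        rcases eq_or_ne a.1 b.1 with h | h
        · exact ⟨a, le_refl _, le_of_eq (congrArg (fun q : T => F q.1.1) h).symm⟩
        rcases hc a.2 b.2 h with hab | hba
        · exact ⟨b, hmono _ _ hab.1, le_refl _⟩
        · exact ⟨a, le_refl _, hmono _ _ hba.1⟩
      have hcomp : ∀ a b : ↥c, Fam a ≤ Fam b → ∀ (x : ↥M) (hia : x ∈ Fam a) (hjb : x ∈ Fam b),
          a.1.1.2 ⟨x, hia⟩ = b.1.1.2 ⟨x, hjb⟩ := by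
        intro a b hab x hia hjb
        rcases eq_or_ne a.1 b.1 with h | h
        · cases a; cases b; simp only at h; subst h; rfl
        rcases hc a.2 b.2 h with h' | h'
        · exact (h'.2 x hia hjb).symm
        · exact h'.2 x hjb hia
      have hleG : ∀ a : ↥c, Fam a ≤ F γ := fun a => hmono _ _ (hlt a.1 a.2).le
      have hG : ∀ x ∈ F γ, ∃ a : ↥c, x ∈ Fam a := by
        intro x hx
        have hsub : F γ ≤ ⨆ a : ↥c, Fam a := by
          rw [hFγ]
          refine iSup_le fun β => iSup_le fun hβ => ?_
          obtain ⟨_, ⟨a, ha, rfl⟩, hβa⟩ := exists_lt_of_lt_csSup hne₀ hβ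
          exact le_trans (hmono _ _ hβa.le) (le_iSup Fam ⟨a, ha⟩)
        exact (Submodule.mem_iSup_of_directed Fam hdir).mp (hsub hx)
      obtain ⟨t, hts, htc⟩ := glue_sections p Fam hdir (fun a => a.1.1.2)
        (fun a x => a.1.2.2 x)
        (fun a b hab x hia hjb => (hcomp a b hab x hia hjb).symm)
        (F γ) hleG hG
      refine ⟨⟨⟨γ, t⟩, hγκ, hts⟩, fun a ha => ⟨(hlt a ha).le, fun x hxa hxγ => ?_⟩⟩
      exact htc ⟨a, ha⟩ x hxa hxγ
    -- Zorn
  obtain ⟨m, hmax⟩ := exists_maximal_of_chains_bounded hub rtrans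
  have hmκ : m.1.1 = κ := by
    by_contra hne
    have hmlt : m.1.1 < κ := lt_of_le_of_ne m.2.1 hne
    obtain ⟨hle', hBexact, C', hC'per, ⟨e⟩⟩ := hstep m.1.1 hmlt
    obtain ⟨t, hts, hext⟩ := extend_section 𝒳 𝒴 hB.balanced i p hi hp hrange hX
      (F m.1.1) (F (m.1.1 + 1)) hle' hBexact.2.1 C' (hC'per C hC) e m.1.2 m.2.2
    have hsucc : m.1.1 + 1 ≤ κ := by
      rw [Ordinal.add_one_eq_succ]
      exact Order.succ_le_of_lt hmlt
    have hrel : rel m ⟨⟨m.1.1 + 1, t⟩, hsucc, hts⟩ :=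
      ⟨le_self_add, fun x ha hb => hext x ha hb⟩
    have := (hmax _ hrel).1
    simp only at this
    have hlt1 : m.1.1 < m.1.1 + 1 := by
      rw [Ordinal.add_one_eq_succ]
      exact Order.lt_succ_of_not_isMax (not_isMax _)
    exact absurd this (not_le.mpr hlt1)
  -- build the global section and the retraction
  have htop : F m.1.1 = ⊤ := by rw [hmκ, hFκ]
  have hmemtop : ∀ x : ↥M, x ∈ F m.1.1 := fun x => by rw [htop]; trivial
  set σ : ↥M →ₗ[R] ↥Eo :=
    m.1.2 ∘ₗ (LinearMap.codRestrict (F m.1.1) LinearMap.id hmemtop) with hσ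
  have hσs : ∀ x, p (σ x) = x := fun x => m.2.2 ⟨x, hmemtop x⟩
  have hρ : ∀ e0 : ↥Eo, e0 - σ (p e0) ∈ LinearMap.range i := by
    intro e0
    rw [hrange]
    show p (e0 - σ (p e0)) = 0
    rw [map_sub, hσs, sub_self]
  set ieq : ↥C ≃ₗ[R] LinearMap.range i := LinearEquiv.ofInjective i hi with hieq
  set ρ : ↥Eo →ₗ[R] ↥(LinearMap.range i) :=
    (LinearMap.id - σ ∘ₗ p).codRestrict (LinearMap.range i) hρ with hρ'
  refine ⟨ieq.symm.toLinearMap ∘ₗ ρ, ?_⟩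
  ext c
  show ieq.symm (ρ (i c)) = c
  have h1 : ρ (i c) = ieq c := by
    apply Subtype.ext
    show i c - σ (p (i c)) = ↑(ieq c)
    rw [hpi c, map_zero, sub_zero]
    simp [hieq]
  rw [h1, LinearEquiv.symm_apply_apply]
end

section
/- Relative Salce Lemma: Let 𝔅 be an admissible Hom-balanced pair in Mod(Λ) and (ℒ, ℛ) a 𝔅-cotorsion pair, i.e., ℒ^{⊥𝔅} = ℛ and ⊥𝔅ℛ = ℒ. Then ℒ is 𝔅-special precovering (every module M admits a 𝔅-exact sequence 0 → R → L → M → 0 with L ∈ ℒ, R ∈ ℛ) if and only if ℛ is 𝔅-special preenveloping (every module M admits a 𝔅-exact sequence 0 → M → R → L → 0 with R ∈ ℛ, L ∈ ℒ). -/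
universe v u

open Function LinearMap

section SalceHelpers

variable {R : Type u} [Ring R]

section Splittings
variable {A B C D : Type v} [AddCommGroup A] [Module R A] [AddCommGroup B] [Module R B]
    [AddCommGroup C] [Module R C] [AddCommGroup D] [Module R D]

theorem retraction_of_section {f : A →ₗ[R] B} {g : B →ₗ[R] C} (h : IsSES f g)
    {s : C →ₗ[R] B} (hs : g ∘ₗ s = LinearMap.id) :
    ∃ r : B →ₗ[R] A, r ∘ₗ f = LinearMap.id := by
  obtain ⟨hf, hg, hk⟩ := h
  have hmem : ∀ b : B, ((LinearMap.id : B →ₗ[R] B) - s ∘ₗ g) b ∈ LinearMap.range f := by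
    intro b
    rw [hk, LinearMap.mem_ker]
    have : g (s (g b)) = g b := congrFun (congrArg DFunLike.coe hs) (g b)
    simp [this]
  refine ⟨(LinearEquiv.ofInjective f hf).symm.toLinearMap ∘ₗ
      LinearMap.codRestrict (LinearMap.range f)
      ((LinearMap.id : B →ₗ[R] B) - s ∘ₗ g) hmem, ?_⟩
  ext a
  have hgfa : g (f a) = 0 := by
    have : f a ∈ LinearMap.ker g := hk ▸ LinearMap.mem_range_self f a
    exact this
  have h1 : (LinearMap.codRestrict (LinearMap.range f)
      ((LinearMap.id : B →ₗ[R] B) - s ∘ₗ g) hmem) (f a)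
      = (LinearEquiv.ofInjective f hf) a := by
    apply Subtype.ext
    show (LinearMap.id : B →ₗ[R] B) (f a) - s (g (f a)) = ((LinearEquiv.ofInjective f hf) a : B)
    rw [LinearEquiv.ofInjective_apply]
    simp [hgfa]
  simp only [LinearMap.comp_apply, LinearMap.id_apply, LinearEquiv.coe_coe]
  rw [h1, LinearEquiv.symm_apply_apply]

theorem section_of_retraction {f : A →ₗ[R] B} {g : B →ₗ[R] C} (h : IsSES f g)
    {r : B →ₗ[R] A} (hr : r ∘ₗ f = LinearMap.id) :
    ∃ s : C →ₗ[R] B, g ∘ₗ s = LinearMap.id := by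
  obtain ⟨hf, hg, hk⟩ := h
  have hrf : ∀ a, r (f a) = a := fun a => congrFun (congrArg DFunLike.coe hr) a
  have hbij : Function.Bijective (g ∘ₗ (LinearMap.ker r).subtype) := by
    constructor
    · intro x y hxy
      have : (x : B) - y ∈ LinearMap.ker g := by
        simp only [LinearMap.mem_ker, map_sub]
        simpa [sub_eq_zero] using hxy
      rw [← hk] at this
      obtain ⟨a, ha⟩ := this
      have hx : r ((x : B) - y) = 0 := by simp [x.2, y.2]
      rw [← ha, hrf] at hx
      apply Subtype.ext
      have : (x : B) - y = 0 := by rw [← ha, hx, map_zero]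
      exact sub_eq_zero.mp this
    · intro c
      obtain ⟨b, rfl⟩ := hg c
      refine ⟨⟨b - f (r b), ?_⟩, ?_⟩
      · simp [hrf]
      · have : g (f (r b)) = 0 := by
          have : f (r b) ∈ LinearMap.ker g := hk ▸ LinearMap.mem_range_self f (r b)
          exact this
        simp [this]
  let e := LinearEquiv.ofBijective _ hbij
  refine ⟨(LinearMap.ker r).subtype ∘ₗ e.symm.toLinearMap, ?_⟩
  ext c
  exact e.apply_symm_apply c

theorem factor_surj (g : B →ₗ[R] C) (hg : Surjective g) (f : B →ₗ[R] D)
    (h : ∀ b, g b = 0 → f b = 0) :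
    ∃ h' : C →ₗ[R] D, h' ∘ₗ g = f := by
  have hker : LinearMap.ker g ≤ LinearMap.ker f := fun b hb => h b hb
  let e := g.quotKerEquivOfSurjective hg
  refine ⟨(LinearMap.ker g).liftQ f hker ∘ₗ e.symm.toLinearMap, ?_⟩
  ext b
  have he : e (Submodule.Quotient.mk b) = g b := rfl
  simp only [LinearMap.comp_apply, LinearEquiv.coe_coe, ← he, LinearEquiv.symm_apply_apply]
  rfl

end Splittings

variable {𝒳 𝒴 : Set (ModuleCat.{v} R)}

/-- `Ext¹(X, N) = 0` for `X ∈ 𝒳`. -/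
theorem ext1_of_mem_X {X : ModuleCat.{v} R} (hX : X ∈ 𝒳) (N : ModuleCat.{v} R) :
    Ext1Vanish 𝒳 𝒴 X N := by
  rintro E i p ⟨hses, hfrom, -⟩
  obtain ⟨ψ, hψ⟩ := hfrom X hX LinearMap.id
  exact retraction_of_section hses hψ

/-- `Ext¹(M, Y) = 0` for `Y ∈ 𝒴`. -/
theorem ext1_of_mem_Y {Y : ModuleCat.{v} R} (hY : Y ∈ 𝒴) (M : ModuleCat.{v} R) :
    Ext1Vanish 𝒳 𝒴 M Y := by
  rintro E i p ⟨hses, -, hinto⟩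
  exact hinto Y hY LinearMap.id

/-- `Ext¹(-, N)`-vanishing is closed under `𝔅`-exact extensions. -/
theorem ext1_extension_left (hBal : IsAdmissibleBalancedPair 𝒳 𝒴)
    {A B C N : ModuleCat.{v} R} (f : ↥A →ₗ[R] ↥B) (g : ↥B →ₗ[R] ↥C)
    (hex : IsBExactSES 𝒳 𝒴 f g)
    (hA : Ext1Vanish 𝒳 𝒴 A N) (hC : Ext1Vanish 𝒳 𝒴 C N) :
    Ext1Vanish 𝒳 𝒴 B N := by
  obtain ⟨⟨hfinj, hgsurj, hfg⟩, hfrom, -⟩ := hex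
  rintro E i q ⟨⟨hiinj, hqsurj, hiq⟩, hqfrom, -⟩
  have hqi : ∀ n, q (i n) = 0 := fun n => by
    have : i n ∈ LinearMap.ker q := hiq ▸ LinearMap.mem_range_self i n
    exact this
  have hgf : ∀ a, g (f a) = 0 := fun a => by
    have : f a ∈ LinearMap.ker g := hfg ▸ LinearMap.mem_range_self f a
    exact this
  -- pullback of q along f
  set P : Submodule R (↥E × ↥A) :=
    LinearMap.ker (q ∘ₗ LinearMap.fst R ↥E ↥A - f ∘ₗ LinearMap.snd R ↥E ↥A) with hP
  have hPmem : ∀ x : ↥E × ↥A, x ∈ P ↔ q x.1 = f x.2 := by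
    intro x
    simp [hP, LinearMap.mem_ker, sub_eq_zero]
  let i' : ↥N →ₗ[R] ↥P := LinearMap.codRestrict P (LinearMap.inl R ↥E ↥A ∘ₗ i)
    (fun n => (hPmem _).2 (by simp [hqi n]))
  let π₂ : ↥P →ₗ[R] ↥A := LinearMap.snd R ↥E ↥A ∘ₗ P.subtype
  have hses2 : IsSES i' π₂ := by
    refine ⟨?_, ?_, ?_⟩
    · intro x y hxy
      apply hiinj
      exact congrArg Prod.fst (congrArg Subtype.val hxy)
    · intro a
      obtain ⟨e, he⟩ := hqsurj (f a)
      exact ⟨⟨(e, a), (hPmem _).2 he⟩, rfl⟩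
    · apply le_antisymm
      · rintro x ⟨n, rfl⟩
        simp [π₂, i', LinearMap.mem_ker]
      · rintro ⟨⟨e, a⟩, hxP⟩ hx
        have ha : a = 0 := hx
        subst ha
        have hq0 : q e = 0 := by simpa using (hPmem _).1 hxP
        have : e ∈ LinearMap.range i := by rw [hiq]; exact hq0
        obtain ⟨n, rfl⟩ := this
        exact ⟨n, rfl⟩
  have hfrom2 : HomFromExact 𝒳 π₂ := by
    intro X hX φ
    obtain ⟨ψ, hψ⟩ := hqfrom X hX (f ∘ₗ φ)
    refine ⟨LinearMap.codRestrict P (ψ.prod φ)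
      (fun x => (hPmem _).2 (congrFun (congrArg DFunLike.coe hψ) x)), ?_⟩
    ext x
    rfl
  have hinto2 : HomIntoExact 𝒴 i' :=
    (hBal.balanced i' π₂ hses2).1 hfrom2
  obtain ⟨r', hr'⟩ := hA (ModuleCat.of R ↥P) i' π₂ ⟨hses2, hfrom2, hinto2⟩
  obtain ⟨s', hs'⟩ := section_of_retraction hses2 hr'
  set σ : ↥A →ₗ[R] ↥E := LinearMap.fst R ↥E ↥A ∘ₗ P.subtype ∘ₗ s' with hσ
  have hqσ : ∀ a, q (σ a) = f a := by
    intro a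
    have h1 : q ((s' a : ↥E × ↥A).1) = f ((s' a : ↥E × ↥A).2) := (hPmem _).1 (s' a).2
    have h2 : ((s' a : ↥E × ↥A)).2 = a := congrFun (congrArg DFunLike.coe hs') a
    rw [hσ]
    simpa [h2] using h1
  set S : Submodule R ↥E := LinearMap.range σ with hS
  set mk : ↥E →ₗ[R] (↥E ⧸ S) := S.mkQ with hmk
  set ibar : ↥N →ₗ[R] (↥E ⧸ S) := mk ∘ₗ i with hibar
  have hSker : S ≤ LinearMap.ker (g ∘ₗ q) := by
    rintro x ⟨a, rfl⟩
    simp [LinearMap.mem_ker, hqσ a, hgf a]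
  set qbar : (↥E ⧸ S) →ₗ[R] ↥C := S.liftQ (g ∘ₗ q) hSker with hqbar
  have hseses : IsSES ibar qbar := by
    refine ⟨?_, ?_, ?_⟩
    · have hker : ∀ n, ibar n = 0 → n = 0 := by
        intro n hn
        have : i n ∈ S := by
          rwa [hibar, LinearMap.comp_apply, hmk, Submodule.mkQ_apply,
            Submodule.Quotient.mk_eq_zero] at hn
        obtain ⟨a, ha⟩ := this
        have : f a = 0 := by rw [← hqσ a, ha, hqi]
        have ha0 : a = 0 := hfinj (by simpa using this)
        have : i n = 0 := by rw [← ha, ha0, map_zero]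
        exact hiinj (by simpa using this)
      intro x y hxy
      have : x - y = 0 := hker _ (by rw [map_sub, hxy, sub_self])
      exact sub_eq_zero.mp this
    · intro c
      obtain ⟨b, rfl⟩ := hgsurj c
      obtain ⟨e, rfl⟩ := hqsurj b
      exact ⟨mk e, rfl⟩
    · apply le_antisymm
      · rintro x ⟨n, rfl⟩
        simp only [LinearMap.mem_ker, hibar, hqbar]
        show S.liftQ (g ∘ₗ q) hSker (S.mkQ (i n)) = 0
        simp [hqi n]
      · intro x hx
        obtain ⟨e, rfl⟩ := S.mkQ_surjective x
        have hgqe : g (q e) = 0 := hx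
        have : q e ∈ LinearMap.range f := by
          rw [hfg]; exact hgqe
        obtain ⟨a, ha⟩ := this
        have hker : e - σ a ∈ LinearMap.range i := by
          rw [hiq]
          show q (e - σ a) = 0
          simp [hqσ a, ha]
        obtain ⟨n, hn⟩ := hker
        refine ⟨n, ?_⟩
        show S.mkQ (i n) = S.mkQ e
        rw [hn]
        rw [show S.mkQ (e - σ a) = S.mkQ e - S.mkQ (σ a) from map_sub _ _ _]
        have : S.mkQ (σ a) = 0 := (Submodule.Quotient.mk_eq_zero S).2 ⟨a, rfl⟩
        rw [this, sub_zero]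
  have hfromE : HomFromExact 𝒳 qbar := by
    intro X hX φ
    obtain ⟨χ, hχ⟩ := hfrom X hX φ
    obtain ⟨ψ, hψ⟩ := hqfrom X hX χ
    refine ⟨mk ∘ₗ ψ, ?_⟩
    ext x
    show S.liftQ (g ∘ₗ q) hSker (S.mkQ (ψ x)) = φ x
    have h1 : q (ψ x) = χ x := congrFun (congrArg DFunLike.coe hψ) x
    have h2 : g (χ x) = φ x := congrFun (congrArg DFunLike.coe hχ) x
    simp [h1, h2]
  have hintoE : HomIntoExact 𝒴 ibar := (hBal.balanced ibar qbar hseses).1 hfromE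
  obtain ⟨t, ht⟩ := hC (ModuleCat.of R (↥E ⧸ S)) ibar qbar ⟨hseses, hfromE, hintoE⟩
  refine ⟨t ∘ₗ mk, ?_⟩
  rw [LinearMap.comp_assoc]
  exact ht

/-- `Ext¹(M, -)`-vanishing is closed under `𝔅`-exact extensions. -/
theorem ext1_extension_right (hBal : IsAdmissibleBalancedPair 𝒳 𝒴)
    {M A B C : ModuleCat.{v} R} (f : ↥A →ₗ[R] ↥B) (g : ↥B →ₗ[R] ↥C)
    (hex : IsBExactSES 𝒳 𝒴 f g)
    (hA : Ext1Vanish 𝒳 𝒴 M A) (hC : Ext1Vanish 𝒳 𝒴 M C) :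
    Ext1Vanish 𝒳 𝒴 M B := by
  obtain ⟨⟨hfinj, hgsurj, hfg⟩, hfrom, -⟩ := hex
  rintro E i q hBEx
  obtain ⟨⟨hiinj, hqsurj, hiq⟩, hqfrom, -⟩ := id hBEx
  have hqi : ∀ b, q (i b) = 0 := fun b => by
    have : i b ∈ LinearMap.ker q := hiq ▸ LinearMap.mem_range_self i b
    exact this
  have hgf : ∀ a, g (f a) = 0 := fun a => by
    have : f a ∈ LinearMap.ker g := hfg ▸ LinearMap.mem_range_self f a
    exact this
  set S : Submodule R ↥E := LinearMap.range (i ∘ₗ f) with hS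
  set mk : ↥E →ₗ[R] (↥E ⧸ S) := S.mkQ with hmk
  obtain ⟨ibar, hibar⟩ := factor_surj g hgsurj (mk ∘ₗ i) (fun b hb => by
    have : b ∈ LinearMap.range f := by rw [hfg]; exact hb
    obtain ⟨a, rfl⟩ := this
    show S.mkQ (i (f a)) = 0
    rw [Submodule.mkQ_apply, Submodule.Quotient.mk_eq_zero]
    exact ⟨a, rfl⟩)
  have hibarp : ∀ b, ibar (g b) = mk (i b) :=
    fun b => congrFun (congrArg DFunLike.coe hibar) b
  have hSq : S ≤ LinearMap.ker q := by
    rintro x ⟨a, rfl⟩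
    show q (i (f a)) = 0
    exact hqi (f a)
  set qbar : (↥E ⧸ S) →ₗ[R] ↥M := S.liftQ q hSq with hqbar
  have hqbarp : ∀ e : ↥E, qbar (mk e) = q e := fun e => rfl
  have hsesbar : IsSES ibar qbar := by
    refine ⟨?_, ?_, ?_⟩
    · have hker : ∀ c, ibar c = 0 → c = 0 := by
        intro c hc
        obtain ⟨b, rfl⟩ := hgsurj c
        rw [hibarp] at hc
        have : i b ∈ S := by
          rwa [hmk, Submodule.mkQ_apply, Submodule.Quotient.mk_eq_zero] at hc
        obtain ⟨a, ha⟩ := this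
        have hba : b = f a := hiinj (by simpa using ha.symm)
        rw [hba]
        exact hgf a
      intro x y hxy
      have : x - y = 0 := hker _ (by rw [map_sub, hxy, sub_self])
      exact sub_eq_zero.mp this
    · intro m
      obtain ⟨e, rfl⟩ := hqsurj m
      exact ⟨mk e, rfl⟩
    · apply le_antisymm
      · rintro x ⟨c, rfl⟩
        obtain ⟨b, rfl⟩ := hgsurj c
        show qbar (ibar (g b)) = 0
        rw [hibarp, hqbarp]
        exact hqi b
      · intro x hx
        obtain ⟨e, rfl⟩ := S.mkQ_surjective x
        have hqe : q e = 0 := hx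
        have : e ∈ LinearMap.range i := by rw [hiq]; exact hqe
        obtain ⟨b, rfl⟩ := this
        refine ⟨g b, ?_⟩
        show ibar (g b) = mk (i b)
        exact hibarp b
  have hfrombar : HomFromExact 𝒳 qbar := by
    intro X hX φ
    obtain ⟨ψ, hψ⟩ := hqfrom X hX φ
    refine ⟨mk ∘ₗ ψ, ?_⟩
    ext x
    show qbar (mk (ψ x)) = φ x
    rw [hqbarp]
    exact congrFun (congrArg DFunLike.coe hψ) x
  have hintobar : HomIntoExact 𝒴 ibar := (hBal.balanced ibar qbar hsesbar).1 hfrombar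
  obtain ⟨rbar, hrbar⟩ := hC (ModuleCat.of R (↥E ⧸ S)) ibar qbar ⟨hsesbar, hfrombar, hintobar⟩
  set ρ : ↥E →ₗ[R] ↥C := rbar ∘ₗ mk with hρ
  have hρi : ∀ b, ρ (i b) = g b := by
    intro b
    show rbar (mk (i b)) = g b
    rw [← hibarp]
    exact congrFun (congrArg DFunLike.coe hrbar) (g b)
  set E₁ : Submodule R ↥E := LinearMap.ker ρ with hE₁
  let u : ↥A →ₗ[R] ↥E₁ := LinearMap.codRestrict E₁ (i ∘ₗ f)
    (fun a => by
      show ρ (i (f a)) = 0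
      rw [hρi, hgf])
  let p₁ : ↥E₁ →ₗ[R] ↥M := q ∘ₗ E₁.subtype
  have hses1 : IsSES u p₁ := by
    refine ⟨?_, ?_, ?_⟩
    · intro x y hxy
      have : i (f x) = i (f y) := congrArg Subtype.val hxy
      exact hfinj (hiinj this)
    · intro m
      obtain ⟨e, he⟩ := hqsurj m
      obtain ⟨b, hb⟩ := hgsurj (ρ e)
      refine ⟨⟨e - i b, ?_⟩, ?_⟩
      · show ρ (e - i b) = 0
        rw [map_sub, hρi, hb, sub_self]
      · show q (e - i b) = m
        rw [map_sub, hqi, sub_zero, he]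
    · apply le_antisymm
      · rintro x ⟨a, rfl⟩
        show q (i (f a)) = 0
        exact hqi (f a)
      · rintro ⟨e, heE⟩ hx
        have hqe : q e = 0 := hx
        have : e ∈ LinearMap.range i := by rw [hiq]; exact hqe
        obtain ⟨b, rfl⟩ := this
        have hρe : ρ (i b) = 0 := heE
        have : b ∈ LinearMap.range f := by
          rw [hfg]
          show g b = 0
          rw [← hρi]; exact hρe
        obtain ⟨a, rfl⟩ := this
        exact ⟨a, rfl⟩
  have hfrom1 : HomFromExact 𝒳 p₁ := by
    intro X hX φ
    obtain ⟨ψ, hψ⟩ := hqfrom X hX φ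
    obtain ⟨χ, hχ⟩ := hfrom X hX (ρ ∘ₗ ψ)
    refine ⟨LinearMap.codRestrict E₁ (ψ - i ∘ₗ χ) (fun x => by
      show ρ (ψ x - i (χ x)) = 0
      rw [map_sub, hρi]
      have : g (χ x) = ρ (ψ x) := congrFun (congrArg DFunLike.coe hχ) x
      rw [this, sub_self]), ?_⟩
    ext x
    show q (ψ x - i (χ x)) = φ x
    rw [map_sub, hqi, sub_zero]
    exact congrFun (congrArg DFunLike.coe hψ) x
  have hinto1 : HomIntoExact 𝒴 u := (hBal.balanced u p₁ hses1).1 hfrom1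
  obtain ⟨t, ht⟩ := hA (ModuleCat.of R ↥E₁) u p₁ ⟨hses1, hfrom1, hinto1⟩
  obtain ⟨s, hs⟩ := section_of_retraction hses1 ht
  have hsec : q ∘ₗ (E₁.subtype ∘ₗ s) = LinearMap.id := by
    rw [← LinearMap.comp_assoc]
    exact hs
  exact retraction_of_section ⟨hiinj, hqsurj, hiq⟩ hsec

end SalceHelpers

/-- Relative Salce Lemma.  For a `𝔅`-cotorsion pair `(ℒ,ℛ)` with
respect to an admissible `Hom`-balanced pair `𝔅 = (𝒳,𝒴)`, the class `ℒ` is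
`𝔅`-special precovering if and only if `ℛ` is `𝔅`-special preenveloping. -/
theorem stmt7 {R : Type u} [Ring R] (𝒳 𝒴 : Set (ModuleCat.{v} R))
    (hB : IsAdmissibleBalancedPair 𝒳 𝒴) (ℒ ℛ : Set (ModuleCat.{v} R))
    (hpair : IsBCotorsionPair 𝒳 𝒴 ℒ ℛ) :
    BSpecialPrecovering 𝒳 𝒴 ℒ ℛ ↔ BSpecialPreenveloping 𝒳 𝒴 ℒ ℛ := by
  constructor
  · -- precovering → preenveloping
    intro hpre M
    obtain ⟨Y, hY, j, hjinj, hjext⟩ := hB.preenveloping M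
    set Sj : Submodule R ↥Y := LinearMap.range j with hSj
    set C : ModuleCat.{v} R := ModuleCat.of R (↥Y ⧸ Sj) with hC
    set g : ↥Y →ₗ[R] ↥C := Sj.mkQ with hg
    have hgj : ∀ m, g (j m) = 0 := fun m => by
      show Sj.mkQ (j m) = 0
      rw [Submodule.mkQ_apply, Submodule.Quotient.mk_eq_zero]
      exact LinearMap.mem_range_self j m
    have hses0 : IsSES j g := ⟨hjinj, Sj.mkQ_surjective, (Submodule.ker_mkQ Sj).symm⟩
    have hinto0 : HomIntoExact 𝒴 j := fun Y' hY' φ => hjext Y' hY' φ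
    have hfrom0 : HomFromExact 𝒳 g := (hB.balanced j g hses0).2 hinto0
    obtain ⟨R', hR', L, hL, a, b, hBx⟩ := hpre C
    obtain ⟨⟨hainj, hbsurj, hab⟩, hbfrom, -⟩ := id hBx
    have hba : ∀ r, b (a r) = 0 := fun r => by
      have : a r ∈ LinearMap.ker b := hab ▸ LinearMap.mem_range_self a r
      exact this
    -- pullback of g and b
    set P : Submodule R (↥Y × ↥L) :=
      LinearMap.ker (g ∘ₗ LinearMap.fst R ↥Y ↥L - b ∘ₗ LinearMap.snd R ↥Y ↥L) with hP
    have hPmem : ∀ x : ↥Y × ↥L, x ∈ P ↔ g x.1 = b x.2 := by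
      intro x
      simp [hP, LinearMap.mem_ker, sub_eq_zero]
    let jP : ↥M →ₗ[R] ↥P := LinearMap.codRestrict P (LinearMap.inl R ↥Y ↥L ∘ₗ j)
      (fun m => (hPmem _).2 (by simp [hgj m]))
    let πL : ↥P →ₗ[R] ↥L := LinearMap.snd R ↥Y ↥L ∘ₗ P.subtype
    let aP : ↥R' →ₗ[R] ↥P := LinearMap.codRestrict P (LinearMap.inr R ↥Y ↥L ∘ₗ a)
      (fun r => (hPmem _).2 (by simp [hba r]))
    let πY : ↥P →ₗ[R] ↥Y := LinearMap.fst R ↥Y ↥L ∘ₗ P.subtype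
    have hsesL : IsSES jP πL := by
      refine ⟨?_, ?_, ?_⟩
      · intro x y hxy
        exact hjinj (congrArg Prod.fst (congrArg Subtype.val hxy))
      · intro l
        obtain ⟨y, hy⟩ := Sj.mkQ_surjective (b l)
        exact ⟨⟨(y, l), (hPmem _).2 hy⟩, rfl⟩
      · apply le_antisymm
        · rintro x ⟨m, rfl⟩
          show (0 : ↥L) = 0
          rfl
        · rintro ⟨⟨y, l⟩, hxP⟩ hx
          have hl : l = 0 := hx
          subst hl
          have hgy : g y = 0 := by simpa using (hPmem _).1 hxP
          have : y ∈ Sj := by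
            have h2 : Sj.mkQ y = 0 := hgy
            rwa [Submodule.mkQ_apply, Submodule.Quotient.mk_eq_zero] at h2
          obtain ⟨m, rfl⟩ := this
          exact ⟨m, rfl⟩
    have hsesY : IsSES aP πY := by
      refine ⟨?_, ?_, ?_⟩
      · intro x y hxy
        exact hainj (congrArg Prod.snd (congrArg Subtype.val hxy))
      · intro y
        obtain ⟨l, hl⟩ := hbsurj (g y)
        exact ⟨⟨(y, l), (hPmem _).2 hl.symm⟩, rfl⟩
      · apply le_antisymm
        · rintro x ⟨r, rfl⟩
          show (0 : ↥Y) = 0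
          rfl
        · rintro ⟨⟨y, l⟩, hxP⟩ hx
          have hy : y = 0 := hx
          subst hy
          have hbl : b l = 0 := by
            have := (hPmem _).1 hxP
            simpa using this.symm
          have : l ∈ LinearMap.range a := by rw [hab]; exact hbl
          obtain ⟨r, rfl⟩ := this
          exact ⟨r, rfl⟩
    have hfromL : HomFromExact 𝒳 πL := by
      intro X hX φ
      obtain ⟨χ, hχ⟩ := hfrom0 X hX (b ∘ₗ φ)
      refine ⟨LinearMap.codRestrict P (χ.prod φ)
        (fun x => (hPmem _).2 (congrFun (congrArg DFunLike.coe hχ) x)), ?_⟩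
      ext x
      rfl
    have hfromY : HomFromExact 𝒳 πY := by
      intro X hX φ
      obtain ⟨χ, hχ⟩ := hbfrom X hX (g ∘ₗ φ)
      refine ⟨LinearMap.codRestrict P (φ.prod χ)
        (fun x => (hPmem _).2 ((congrFun (congrArg DFunLike.coe hχ) x).symm)), ?_⟩
      ext x
      rfl
    have hintoL : HomIntoExact 𝒴 jP := (hB.balanced jP πL hsesL).1 hfromL
    have hintoY : HomIntoExact 𝒴 aP := (hB.balanced aP πY hsesY).1 hfromY
    have hPmemℛ : ModuleCat.of R ↥P ∈ ℛ := by
      rw [← hpair.1]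
      intro L₀ hL₀
      have hR'perp : R' ∈ rightPerp 𝒳 𝒴 ℒ := by rw [hpair.1]; exact hR'
      exact ext1_extension_right hB aP πY ⟨hsesY, hfromY, hintoY⟩
        (hR'perp L₀ hL₀) (ext1_of_mem_Y hY L₀)
    exact ⟨ModuleCat.of R ↥P, hPmemℛ, L, hL, jP, πL, hsesL, hfromL, hintoL⟩
  · -- preenveloping → precovering
    intro henv M
    obtain ⟨X, hX, p, hpsurj, hplift⟩ := hB.precovering M
    set K : Submodule R ↥X := LinearMap.ker p with hK
    set ι : ↥K →ₗ[R] ↥X := K.subtype with hι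
    have hpι : ∀ k : ↥K, p (ι k) = 0 := fun k => k.2
    have hses0 : IsSES ι p := ⟨Subtype.val_injective, hpsurj, by rw [hι, Submodule.range_subtype]⟩
    have hfrom0 : HomFromExact 𝒳 p := fun X' hX' φ => hplift X' hX' φ
    obtain ⟨R₀, hR₀, L', hL', u, v, hBv⟩ := henv (ModuleCat.of R ↥K)
    obtain ⟨⟨huinj, hvsurj, huv⟩, -, hvinto⟩ := id hBv
    have hvu : ∀ k, v (u k) = 0 := fun k => by
      have : u k ∈ LinearMap.ker v := huv ▸ LinearMap.mem_range_self u k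
      exact this
    -- pushout of ι and u
    set W : Submodule R (↥R₀ × ↥X) := LinearMap.range (u.prod (-ι)) with hW
    set mk : (↥R₀ × ↥X) →ₗ[R] ((↥R₀ × ↥X) ⧸ W) := W.mkQ with hmk
    set e₁ : ↥R₀ →ₗ[R] ((↥R₀ × ↥X) ⧸ W) := mk ∘ₗ LinearMap.inl R ↥R₀ ↥X with he₁
    set e₂ : ↥X →ₗ[R] ((↥R₀ × ↥X) ⧸ W) := mk ∘ₗ LinearMap.inr R ↥R₀ ↥X with he₂
    have hWq : W ≤ LinearMap.ker ((0 : ↥R₀ →ₗ[R] ↥M).coprod p) := by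
      rintro x ⟨k, rfl⟩
      show (0 : ↥R₀ →ₗ[R] ↥M) (u k) + p (-(ι k)) = 0
      simp [hpι k]
    set qQ : ((↥R₀ × ↥X) ⧸ W) →ₗ[R] ↥M := W.liftQ ((0 : ↥R₀ →ₗ[R] ↥M).coprod p) hWq with hqQ
    have hWv : W ≤ LinearMap.ker (v.coprod (0 : ↥X →ₗ[R] ↥L')) := by
      rintro x ⟨k, rfl⟩
      show v (u k) + (0 : ↥X →ₗ[R] ↥L') (-(ι k)) = 0
      simp [hvu k]
    set vQ : ((↥R₀ × ↥X) ⧸ W) →ₗ[R] ↥L' := W.liftQ (v.coprod (0 : ↥X →ₗ[R] ↥L')) hWv with hvQ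
    have hqQmk : ∀ x : ↥R₀ × ↥X, qQ (mk x) = p x.2 := fun x => by
      show (0 : ↥R₀ →ₗ[R] ↥M) x.1 + p x.2 = p x.2
      simp
    have hvQmk : ∀ x : ↥R₀ × ↥X, vQ (mk x) = v x.1 := fun x => by
      show v x.1 + (0 : ↥X →ₗ[R] ↥L') x.2 = v x.1
      simp
    have hses1 : IsSES e₁ qQ := by
      refine ⟨?_, ?_, ?_⟩
      · have hker : ∀ r, e₁ r = 0 → r = 0 := by
          intro r hr
          have : ((r, 0) : ↥R₀ × ↥X) ∈ W := by
            rwa [he₁, LinearMap.comp_apply, hmk, Submodule.mkQ_apply,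
              Submodule.Quotient.mk_eq_zero] at hr
          obtain ⟨k, hk⟩ := this
          have hk2 : -(ι k) = (0 : ↥X) := congrArg Prod.snd hk
          have hk0 : k = 0 := by
            apply Subtype.val_injective
            simpa [hι] using neg_eq_zero.mp hk2
          have : u k = r := congrArg Prod.fst hk
          rw [← this, hk0, map_zero]
        intro x y hxy
        have : x - y = 0 := hker _ (by rw [map_sub, hxy, sub_self])
        exact sub_eq_zero.mp this
      · intro m
        obtain ⟨x, rfl⟩ := hpsurj m
        exact ⟨mk (0, x), hqQmk (0, x)⟩
      · apply le_antisymm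
        · rintro z ⟨r, rfl⟩
          show qQ (mk (r, 0)) = 0
          rw [hqQmk, map_zero]
        · intro z hz
          obtain ⟨⟨r, x⟩, rfl⟩ := W.mkQ_surjective z
          have hpx : p x = 0 := by
            have : qQ (W.mkQ (r, x)) = 0 := hz
            rwa [← hmk, hqQmk] at this
          set k : ↥K := ⟨x, hpx⟩ with hk
          refine ⟨r + u k, ?_⟩
          show mk (r + u k, 0) = W.mkQ (r, x)
          rw [hmk, Submodule.mkQ_apply, Submodule.mkQ_apply, Submodule.Quotient.eq]
          refine ⟨k, ?_⟩
          show (u k, -(ι k)) = (r + u k - r, 0 - x)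
          have : (ι k : ↥X) = x := rfl
          simp [this]
    have hses2 : IsSES e₂ vQ := by
      refine ⟨?_, ?_, ?_⟩
      · have hker : ∀ x, e₂ x = 0 → x = 0 := by
          intro x hx
          have : ((0, x) : ↥R₀ × ↥X) ∈ W := by
            rwa [he₂, LinearMap.comp_apply, hmk, Submodule.mkQ_apply,
              Submodule.Quotient.mk_eq_zero] at hx
          obtain ⟨k, hk⟩ := this
          have hk1 : u k = (0 : ↥R₀) := congrArg Prod.fst hk
          have hk0 : k = 0 := huinj (by simpa using hk1)
          have : -(ι k) = x := congrArg Prod.snd hk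
          rw [← this, hk0]
          simp
        intro x y hxy
        have : x - y = 0 := hker _ (by rw [map_sub, hxy, sub_self])
        exact sub_eq_zero.mp this
      · intro l
        obtain ⟨r, rfl⟩ := hvsurj l
        exact ⟨mk (r, 0), hvQmk (r, 0)⟩
      · apply le_antisymm
        · rintro z ⟨x, rfl⟩
          show vQ (mk (0, x)) = 0
          rw [hvQmk, map_zero]
        · intro z hz
          obtain ⟨⟨r, x⟩, rfl⟩ := W.mkQ_surjective z
          have hvr : v r = 0 := by
            have : vQ (W.mkQ (r, x)) = 0 := hz
            rwa [← hmk, hvQmk] at this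
          have : r ∈ LinearMap.range u := by rw [huv]; exact hvr
          obtain ⟨k, rfl⟩ := this
          refine ⟨x + ι k, ?_⟩
          show mk (0, x + ι k) = W.mkQ (u k, x)
          rw [hmk, Submodule.mkQ_apply, Submodule.mkQ_apply, Submodule.Quotient.eq]
          refine ⟨-k, ?_⟩
          show (u (-k), -(ι (-k))) = (0 - u k, (x + ι k) - x)
          simp
    have hfromQ : HomFromExact 𝒳 qQ := by
      intro X' hX' φ
      obtain ⟨χ, hχ⟩ := hplift X' hX' φ
      refine ⟨e₂ ∘ₗ χ, ?_⟩
      ext x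
      show qQ (mk (0, χ x)) = φ x
      rw [hqQmk]
      exact congrFun (congrArg DFunLike.coe hχ) x
    have hintoQ : HomIntoExact 𝒴 e₁ := (hB.balanced e₁ qQ hses1).1 hfromQ
    have hinto2 : HomIntoExact 𝒴 e₂ := by
      intro Y' hY' φ
      obtain ⟨χ, hχ⟩ := hvinto Y' hY' (φ ∘ₗ ι)
      have hWkill : W ≤ LinearMap.ker (χ.coprod φ) := by
        rintro x ⟨k, rfl⟩
        show χ (u k) + φ (-(ι k)) = 0
        have : χ (u k) = φ (ι k) := congrFun (congrArg DFunLike.coe hχ) k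
        rw [this, map_neg, add_neg_cancel]
      refine ⟨W.liftQ (χ.coprod φ) hWkill, ?_⟩
      ext x
      show χ 0 + φ x = φ x
      simp
    have hfrom2 : HomFromExact 𝒳 vQ := (hB.balanced e₂ vQ hses2).2 hinto2
    have hQmemℒ : ModuleCat.of R ((↥R₀ × ↥X) ⧸ W) ∈ ℒ := by
      rw [← hpair.2]
      intro R₁ hR₁
      have hL'perp : L' ∈ leftPerp 𝒳 𝒴 ℛ := by rw [hpair.2]; exact hL'
      exact ext1_extension_left hB (A := X) (C := L') e₂ vQ ⟨hses2, hfrom2, hinto2⟩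
        (ext1_of_mem_X hX R₁) (hL'perp R₁ hR₁)
    exact ⟨R₀, hR₀, ModuleCat.of R ((↥R₀ × ↥X) ⧸ W), hQmemℒ, e₁, qQ, hses1,
      (hB.balanced e₁ qQ hses1).2 hintoQ, hintoQ⟩
end

section
/- Let Λ be a ring and T a Σ-pure-injective Λ-module, i.e., T^{(κ)} is pure-injective for every cardinal κ. Then T is Σ-pure-split: every pure embedding N ↪ M with M ∈ Add_Λ(T) splits; in particular, pure submodules of modules in Add_Λ(T) are direct summands. -/
universe v u

open Function LinearMap

section Pure

variable {R : Type u} [Ring R]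

/-- `f : N → M` is a pure embedding: it is injective and every finite system of linear
equations `∑ j, a i j • x j = f (c i)` with constants from `N` which is solvable in `M`
is solvable in `N`.  (This is the standard characterization of purity, equivalent to
the sequence remaining exact after tensoring with every right module.) -/
def IsPureEmbedding {N M : Type v} [AddCommGroup N] [Module R N]
    [AddCommGroup M] [Module R M] (f : N →ₗ[R] M) : Prop :=
  Function.Injective f ∧
  ∀ (m k : ℕ) (a : Fin m → Fin k → R) (c : Fin m → N),
    (∃ x : Fin k → M, ∀ i, (∑ j, a i j • x j) = f (c i)) →
    ∃ y : Fin k → N, ∀ i, (∑ j, a i j • y j) = c i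

/-- `Q` is pure-injective: every pure embedding out of `Q` splits. -/
def IsPureInjective (Q : Type v) [AddCommGroup Q] [Module R Q] : Prop :=
  ∀ (M : Type v) [AddCommGroup M] [Module R M] (g : Q →ₗ[R] M),
    IsPureEmbedding g → ∃ r : M →ₗ[R] Q, r ∘ₗ g = LinearMap.id

/-- `Add(T)`: direct summands of (arbitrary) direct sums of copies of `T`. -/
def AddClass' (T : ModuleCat.{v} R) : Set (ModuleCat.{v} R) :=
  {M | ∃ (ι : Type v) (s : ↥M →ₗ[R] (ι →₀ ↥T)) (r : (ι →₀ ↥T) →ₗ[R] ↥M),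
    r ∘ₗ s = LinearMap.id}

end Pure

namespace Stmt18Aux
open Finsupp

variable {R : Type u} [Ring R]

section Basics

variable {A B C : Type v} [AddCommGroup A] [Module R A] [AddCommGroup B] [Module R B]
  [AddCommGroup C] [Module R C]

lemma pure_comp {f : A →ₗ[R] B} {g : B →ₗ[R] C} (hf : IsPureEmbedding f)
    (hg : IsPureEmbedding g) : IsPureEmbedding (g ∘ₗ f) := by
  refine ⟨hg.1.comp hf.1, fun m k a c ⟨x, hx⟩ => ?_⟩
  obtain ⟨x', hx'⟩ := hg.2 m k a (fun i => f (c i)) ⟨x, by simpa using hx⟩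
  exact hf.2 m k a c ⟨x', hx'⟩

lemma pure_of_split (s : A →ₗ[R] B) (r : B →ₗ[R] A) (h : r ∘ₗ s = LinearMap.id) :
    IsPureEmbedding s := by
  have hr : ∀ x, r (s x) = x := fun x => congrArg (fun φ => φ x) h
  refine ⟨fun x y hxy => by rw [← hr x, ← hr y, hxy], fun m k a c ⟨x, hx⟩ => ?_⟩
  refine ⟨fun j => r (x j), fun i => ?_⟩
  have := congrArg r (hx i)
  simpa [map_sum, hr] using this

lemma pureInjective_congr {A' : Type v} [AddCommGroup A'] [Module R A'] (e : A ≃ₗ[R] A')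
    (h : IsPureInjective (R := R) A) : IsPureInjective (R := R) A' := by
  intro M _ _ g hg
  have hepure : IsPureEmbedding (g ∘ₗ (e : A →ₗ[R] A')) :=
    pure_comp (pure_of_split (e : A →ₗ[R] A') (e.symm : A' →ₗ[R] A)
      (by ext x; simp)) hg
  obtain ⟨r, hr⟩ := h M (g ∘ₗ (e : A →ₗ[R] A')) hepure
  refine ⟨(e : A →ₗ[R] A') ∘ₗ r, ?_⟩
  ext x
  have := congrArg (fun φ => φ (e.symm x)) hr
  simp at this
  simp [this]

end Basics

variable {R : Type u} [Ring R]

section LC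
variable {V : Type*} {P P' : Type*} [AddCommGroup P] [Module R P] [AddCommGroup P'] [Module R P']

lemma LC_apply (u : V → P) (row : V →₀ R) :
    linearCombination R u row = ∑ q ∈ row.support, row q • u q := rfl

lemma LC_support_subset (u : V → P) (row : V →₀ R) {W : Finset V} (hW : row.support ⊆ W) :
    linearCombination R u row = ∑ q ∈ W, row q • u q := by
  rw [LC_apply]
  exact Finset.sum_subset hW (fun x _ hx => by
    rw [Finsupp.notMem_support_iff.1 hx, zero_smul])

lemma LC_zero (row : V →₀ R) : linearCombination R (fun _ => (0 : P)) row = 0 := by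
  simp [LC_apply]

lemma LC_add (u u' : V → P) (row : V →₀ R) :
    linearCombination R (fun q => u q + u' q) row
      = linearCombination R u row + linearCombination R u' row := by
  simp [LC_apply, smul_add, Finset.sum_add_distrib]

lemma LC_neg (u : V → P) (row : V →₀ R) :
    linearCombination R (fun q => -(u q)) row = -(linearCombination R u row) := by
  simp [LC_apply, smul_neg, Finset.sum_neg_distrib]

lemma LC_sub (u u' : V → P) (row : V →₀ R) :
    linearCombination R (fun q => u q - u' q) row
      = linearCombination R u row - linearCombination R u' row := by
  simp [LC_apply, smul_sub, Finset.sum_sub_distrib]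

lemma LC_comp (h : P →ₗ[R] P') (u : V → P) (row : V →₀ R) :
    linearCombination R (fun q => h (u q)) row = h (linearCombination R u row) := by
  simp [LC_apply, map_sum, map_smul]

lemma LC_pi {I : Type*} {B : Type*} [AddCommGroup B] [Module R B]
    (u : V → (I → B)) (row : V →₀ R) (t : I) :
    (linearCombination R u row) t = linearCombination R (fun q => u q t) row := by
  simp [LC_apply, Finset.sum_apply]

lemma LC_single_one (u : V → P) (a : V) :
    linearCombination R u (Finsupp.single a (1 : R)) = u a := by
  simp

end LC

section Solver
variable {N M : Type v} [AddCommGroup N] [Module R N] [AddCommGroup M] [Module R M]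

/-- purity lets us pull back solvability of finite `Finsupp`-encoded linear systems. -/
lemma solve_of_pure {g : N →ₗ[R] M} (hg : IsPureEmbedding g)
    {V : Type*} (S : Set ((V →₀ R) × N)) (hS : S.Finite)
    (h : ∃ u : V → M, ∀ e ∈ S, linearCombination R u e.1 = g e.2) :
    ∃ vv : V → N, ∀ e ∈ S, linearCombination R vv e.1 = e.2 := by
  classical
  haveI : Fintype S := hS.fintype
  set m := Fintype.card S with hm
  set es : Fin m ≃ S := (Fintype.equivFin S).symm with hes
  set W : Finset V := hS.toFinset.sup (fun e => e.1.support) with hW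
  set k := W.card with hk
  set ew : {x // x ∈ W} ≃ Fin k := W.equivFin with hew
  set var : Fin k → V := fun j => (ew.symm j : V) with hvar
  have hsupp : ∀ e ∈ S, (e : (V →₀ R) × N).1.support ⊆ W := by
    intro e he
    exact Finset.le_sup (f := fun e => e.1.support) (hS.mem_toFinset.2 he)
  -- reindex sums over W by Fin k
  have hsum : ∀ (P : Type v) [AddCommGroup P] [Module R P] (u : V → P) (e : (V →₀ R) × N),
      e ∈ S → linearCombination R u e.1 = ∑ j, e.1 (var j) • u (var j) := by
    intro P _ _ u e he
    rw [LC_support_subset u e.1 (hsupp e he)]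
    rw [← Finset.sum_coe_sort W (fun q => e.1 q • u q)]
    exact (Equiv.sum_comp ew.symm (fun x : {x // x ∈ W} => e.1 (x : V) • u (x : V))).symm
  set a : Fin m → Fin k → R := fun i j => (es i).1.1 (var j) with ha
  set c : Fin m → N := fun i => (es i).1.2 with hc
  obtain ⟨x, hx⟩ := h
  obtain ⟨y, hy⟩ := hg.2 m k a c ⟨fun j => x (var j), fun i => by
    rw [← hsum M x (es i) (es i).2]
    exact hx (es i) (es i).2⟩
  refine ⟨fun q => if hq : q ∈ W then y (ew ⟨q, hq⟩) else 0, fun e he => ?_⟩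
  rw [hsum N _ e he]
  have : ∀ j, (fun q => if hq : q ∈ W then y (ew ⟨q, hq⟩) else 0) (var j) = y j := by
    intro j
    have hmem : var j ∈ W := (ew.symm j).2
    simp only [hmem, dif_pos]
    congr 1
    have : (⟨var j, hmem⟩ : {x // x ∈ W}) = ew.symm j := Subtype.ext rfl
    rw [this, Equiv.apply_symm_apply]
  simp_rw [this]
  have hi := hy (es.symm ⟨e, he⟩)
  simpa [ha, hc, Equiv.apply_symm_apply] using hi

set_option linter.unusedSectionVars false

end Solver

section Systems
variable {N Q : Type v} [AddCommGroup N] [Module R N] [AddCommGroup Q] [Module R Q]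

/-- The big linear system over variables indexed by `Q` expressing that an assignment
`u : Q → N` is an `R`-linear retraction of `g`. Each equation is a pair
(finitely supported row of coefficients, constant in `N`). -/
def bigSys (g : N →ₗ[R] Q) : Set ((Q →₀ R) × N) :=
  {e | (∃ w w' : Q, e = (Finsupp.single (w + w') (1:R) - Finsupp.single w 1 - Finsupp.single w' 1, 0))
    ∨ (∃ (r : R) (w : Q), e = (Finsupp.single (r • w) (1:R) - Finsupp.single w r, 0))
    ∨ (∃ n : N, e = (Finsupp.single (g n) (1:R), n))}

/-- Solution set (at the distinguished variable `q₀`) of a homogeneous system, in any module. -/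
def Dset (P : Type v) [AddCommGroup P] [Module R P] (q₀ : Q) (Rows : Set (Q →₀ R))
    (Vars : Set Q) : Set P :=
  {p | ∃ u : Q → P, u q₀ = p ∧ (∀ v ∈ Vars, u v = 0) ∧
    ∀ row ∈ Rows, Finsupp.linearCombination R u row = 0}

/-- Solution set (at `q₀`) of an inhomogeneous system with constants in `N`. -/
def Cset (q₀ : Q) (F : Set ((Q →₀ R) × N)) (G : Set (Q × N)) : Set N :=
  {n | ∃ u : Q → N, u q₀ = n ∧ (∀ p ∈ G, u p.1 = p.2) ∧
    ∀ e ∈ F, Finsupp.linearCombination R u e.1 = e.2}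

/-- Every finite subsystem (of the system augmented by finitely many already-chosen values)
is solvable. -/
def FinSolv (g : N →ₗ[R] Q) (s : Set (Q × N)) : Prop :=
  ∀ F ⊆ bigSys g, F.Finite → ∀ G ⊆ s, G.Finite →
    ∃ u : Q → N, (∀ p ∈ G, u p.1 = p.2) ∧
      ∀ e ∈ F, Finsupp.linearCombination R u e.1 = e.2

variable {P P' : Type v} [AddCommGroup P] [Module R P] [AddCommGroup P'] [Module R P']

lemma Dset_zero (q₀ : Q) (Rows : Set (Q →₀ R)) (Vars : Set Q) :
    (0 : P) ∈ Dset P q₀ Rows Vars :=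
  ⟨fun _ => 0, rfl, fun _ _ => rfl, fun row _ => LC_zero row⟩

lemma Dset_neg {q₀ : Q} {Rows : Set (Q →₀ R)} {Vars : Set Q} {p : P}
    (hp : p ∈ Dset P q₀ Rows Vars) : (-p) ∈ Dset P q₀ Rows Vars := by
  obtain ⟨u, h1, h2, h3⟩ := hp
  exact ⟨fun q => -(u q), by dsimp only; rw [h1], fun v hv => by dsimp only; rw [h2 v hv, neg_zero],
    fun row hr => by rw [LC_neg, h3 row hr, neg_zero]⟩

lemma Dset_mono {q₀ : Q} {Rows Rows' : Set (Q →₀ R)} {Vars Vars' : Set Q}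
    (hR : Rows ⊆ Rows') (hV : Vars ⊆ Vars') :
    Dset P q₀ Rows' Vars' ⊆ Dset P q₀ Rows Vars := by
  rintro p ⟨u, h1, h2, h3⟩
  exact ⟨u, h1, fun v hv => h2 v (hV hv), fun row hr => h3 row (hR hr)⟩

lemma Dset_map {q₀ : Q} {Rows : Set (Q →₀ R)} {Vars : Set Q} (h : P →ₗ[R] P') {p : P}
    (hp : p ∈ Dset P q₀ Rows Vars) : h p ∈ Dset P' q₀ Rows Vars := by
  obtain ⟨u, h1, h2, h3⟩ := hp
  exact ⟨fun q => h (u q), by dsimp only; rw [h1], fun v hv => by dsimp only; rw [h2 v hv, map_zero],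
    fun row hr => by rw [LC_comp, h3 row hr, map_zero]⟩

lemma Dset_pi {I : Type v} {B : Type v} [AddCommGroup B] [Module R B] {q₀ : Q}
    {Rows : Set (Q →₀ R)} {Vars : Set Q} {p : I → B}
    (hp : ∀ t, p t ∈ Dset B q₀ Rows Vars) : p ∈ Dset (I → B) q₀ Rows Vars := by
  classical
  choose u h1 h2 h3 using hp
  refine ⟨fun q t => u t q, funext fun t => h1 t, fun v hv => funext fun t => ?_, 
    fun row hr => funext fun t => ?_⟩
  · exact h2 t v hv
  · rw [LC_pi]
    exact h3 t row hr

/-- Purity transfers membership in homogeneous pp-solution sets. -/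
lemma Dset_pure {g : N →ₗ[R] Q} (hg : IsPureEmbedding g) {q₀ : Q}
    {Rows : Set (Q →₀ R)} {Vars : Set Q} (hRf : Rows.Finite) (hVf : Vars.Finite) (n : N) :
    n ∈ Dset N q₀ Rows Vars ↔ g n ∈ Dset Q q₀ Rows Vars := by
  constructor
  · exact fun h => Dset_map g h
  · rintro ⟨u, h1, h2, h3⟩
    classical
    set S : Set ((Q →₀ R) × N) :=
      ((fun row => (row, (0:N))) '' Rows) ∪ ((fun v => (Finsupp.single v (1:R), (0:N))) '' Vars)
        ∪ {(Finsupp.single q₀ (1:R), n)} with hS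
    have hSf : S.Finite := ((hRf.image _).union (hVf.image _)).union (Set.finite_singleton _)
    obtain ⟨vv, hvv⟩ := solve_of_pure hg S hSf ⟨u, by
      rintro e (( ⟨row, hrow, rfl⟩ | ⟨v, hv, rfl⟩) | rfl)
      · rw [h3 row hrow, map_zero]
      · rw [LC_single_one, h2 v hv, map_zero]
      · rw [LC_single_one, h1]⟩
    refine ⟨vv, ?_, fun v hv => ?_, fun row hrow => ?_⟩
    · have := hvv _ (Set.mem_union_right _ rfl)
      rwa [LC_single_one] at this
    · have := hvv _ (Set.mem_union_left _ (Set.mem_union_right _ ⟨v, hv, rfl⟩))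
      rwa [LC_single_one] at this
    · exact hvv _ (Set.mem_union_left _ (Set.mem_union_left _ ⟨row, hrow, rfl⟩))

lemma Cset_mono {q₀ : Q} {F F' : Set ((Q →₀ R) × N)} {G G' : Set (Q × N)}
    (hF : F ⊆ F') (hG : G ⊆ G') : Cset q₀ F' G' ⊆ Cset q₀ F G := by
  rintro n ⟨u, h1, h2, h3⟩
  exact ⟨u, h1, fun p hp => h2 p (hG hp), fun e he => h3 e (hF he)⟩

lemma Cset_sub_mem {q₀ : Q} {F : Set ((Q →₀ R) × N)} {G : Set (Q × N)} {c c' : N}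
    (hc : c ∈ Cset q₀ F G) (hc' : c' ∈ Cset q₀ F G) :
    c - c' ∈ Dset N q₀ (Prod.fst '' F) (Prod.fst '' G) := by
  obtain ⟨u, h1, h2, h3⟩ := hc
  obtain ⟨u', h1', h2', h3'⟩ := hc'
  refine ⟨fun q => u q - u' q, by dsimp only; rw [h1, h1'], ?_, ?_⟩
  · rintro v ⟨p, hp, rfl⟩
    dsimp only; rw [h2 p hp, h2' p hp, sub_self]
  · rintro row ⟨e, he, rfl⟩
    rw [LC_sub, h3 e he, h3' e he, sub_self]

lemma Cset_add_mem {q₀ : Q} {F : Set ((Q →₀ R) × N)} {G : Set (Q × N)} {c d : N}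
    (hc : c ∈ Cset q₀ F G) (hd : d ∈ Dset N q₀ (Prod.fst '' F) (Prod.fst '' G)) :
    c + d ∈ Cset q₀ F G := by
  obtain ⟨u, h1, h2, h3⟩ := hc
  obtain ⟨u', h1', h2', h3'⟩ := hd
  refine ⟨fun q => u q + u' q, by dsimp only; rw [h1, h1'], fun p hp => ?_, fun e he => ?_⟩
  · dsimp only; rw [h2 p hp, h2' p.1 ⟨p, hp, rfl⟩, add_zero]
  · rw [LC_add, h3 e he, h3' e.1 ⟨e, he, rfl⟩, add_zero]

lemma Cset_nonempty {g : N →ₗ[R] Q} {s : Set (Q × N)} (hs : FinSolv g s) (q₀ : Q)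
    {F : Set ((Q →₀ R) × N)} {G : Set (Q × N)} (hF : F ⊆ bigSys g) (hFf : F.Finite)
    (hG : G ⊆ s) (hGf : G.Finite) : (Cset q₀ F G).Nonempty := by
  obtain ⟨u, h1, h2⟩ := hs F hF hFf G hG hGf
  exact ⟨u q₀, u, rfl, h1, h2⟩

/-- The identity assignment solves the big system inside `Q`. -/
lemma bigSys_solvable (g : N →ₗ[R] Q) :
    ∀ e ∈ bigSys g, Finsupp.linearCombination R (fun q : Q => q) e.1 = g e.2 := by
  rintro e (⟨w, w', rfl⟩ | ⟨r, w, rfl⟩ | ⟨n, rfl⟩)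
  · simp [map_sub]
  · simp [map_sub, Finsupp.linearCombination_single]
  · simp

lemma finSolv_empty (g : N →ₗ[R] Q) (hg : IsPureEmbedding g) : FinSolv g (∅ : Set (Q × N)) := by
  intro F hF hFf G hG hGf
  have hGe : G = ∅ := Set.subset_empty_iff.1 hG
  obtain ⟨vv, hvv⟩ := solve_of_pure hg F hFf ⟨fun q => q, fun e he => bigSys_solvable g e (hF he)⟩
  exact ⟨vv, by simp [hGe], hvv⟩

end Systems

section Chain
variable {Q : Type v} [AddCommGroup Q] [Module R Q]

/-- The inclusion of the direct sum into the product, as a linear map. -/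
def lcoe (L : Type v) : (L →₀ Q) →ₗ[R] (L → Q) where
  toFun f := ⇑f
  map_add' f g := by ext l; simp
  map_smul' r f := by ext l; simp

lemma lcoe_pure (L : Type v) : IsPureEmbedding (lcoe (R := R) (Q := Q) L) := by
  classical
  constructor
  · intro f g hfg
    exact DFunLike.coe_injective hfg
  · intro m k a c ⟨x, hx⟩
    set W : Finset L := Finset.univ.sup (fun i : Fin m => (c i).support) with hW
    refine ⟨fun j => Finsupp.onFinset W (fun l => if l ∈ W then x j l else 0)
      (fun l h => by by_contra hl; simp [hl] at h), fun i => ?_⟩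
    ext l
    rw [Finsupp.finset_sum_apply]
    simp only [Finsupp.smul_apply, Finsupp.onFinset_apply]
    by_cases hl : l ∈ W
    · simp only [hl, if_pos]
      have := congrFun (hx i) l
      simp at this; exact this
    · simp only [hl, if_neg, not_false_iff, smul_zero, Finset.sum_const_zero]
      symm
      rw [← Finsupp.notMem_support_iff]
      intro hc
      exact hl (Finset.le_sup (f := fun i : Fin m => (c i).support) (Finset.mem_univ i) hc)

/-- the Gruson–Jensen argument: if the countable direct sum power of `Q` is pure-injective,
then there is no strictly descending chain of pp-definable subsets of `Q`. -/
lemma no_strict_chain {N : Type v} [AddCommGroup N] [Module R N]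
    (hQpi : IsPureInjective (R := R) (ULift.{v} ℕ →₀ Q)) (q₀ : Q)
    (Rows : ℕ → Set (Q →₀ R)) (Vars : ℕ → Set Q)
    (hmR : ∀ n, Rows n ⊆ Rows (n + 1)) (hmV : ∀ n, Vars n ⊆ Vars (n + 1))
    (hstrict : ∀ n, ∃ a : Q, a ∈ Dset Q q₀ (Rows n) (Vars n) ∧
      a ∉ Dset Q q₀ (Rows (n + 1)) (Vars (n + 1))) : False := by
  classical
  choose a ha hna using hstrict
  set L := ULift.{v} ℕ with hL
  -- monotonicity of Φ
  have hmono : ∀ {n m : ℕ}, n ≤ m →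
      Dset Q q₀ (Rows m) (Vars m) ⊆ Dset Q q₀ (Rows n) (Vars n) := by
    intro n m hnm
    induction hnm with
    | refl => exact fun _ h => h
    | step h ih => exact fun p hp => ih (Dset_mono (hmR _) (hmV _) hp)
  obtain ⟨ρ, hρ⟩ := hQpi (L → Q) (lcoe L) (lcoe_pure L)
  have hρcoe : ∀ f : L →₀ Q, ρ (⇑f) = f := fun f => congrArg (fun φ => φ f) hρ
  set afun : L → Q := fun l => a l.down with hafun
  set head : ℕ → (L →₀ Q) := fun n => ∑ i ∈ Finset.range n, Finsupp.single (ULift.up i) (a i)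
    with hhead
  have head_apply : ∀ n l, (head n) l = if l.down < n then a l.down else 0 := by
    intro n l
    rw [hhead]
    rw [Finsupp.finset_sum_apply]
    have : ∀ i ∈ Finset.range n, (Finsupp.single (ULift.up i) (a i)) l
        = if i = l.down then a i else 0 := by
      intro i _
      rw [Finsupp.single_apply]
      congr 1
      simp only [eq_iff_iff]
      constructor
      · intro h; rw [← h]
      · intro h; rw [h]
    rw [Finset.sum_congr rfl this, Finset.sum_ite_eq' (Finset.range n) l.down a]
    simp [Finset.mem_range]
  set rest : ℕ → (L → Q) := fun n => afun - (lcoe (R := R) (Q := Q) L) (head n) with hrest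
  have rest_mem : ∀ n, rest n ∈ Dset (L → Q) q₀ (Rows n) (Vars n) := by
    intro n
    apply Dset_pi
    intro l
    have : rest n l = afun l - (head n) l := rfl
    rw [this, head_apply]
    by_cases hl : l.down < n
    · simp only [hl, if_pos, hafun, sub_self]
      exact Dset_zero q₀ _ _
    · simp only [hl, if_neg, not_false_iff, sub_zero]
      exact hmono (Nat.le_of_not_lt hl) (ha l.down)
  have key : ∀ n, ρ afun = (head n) + ρ (rest n) := by
    intro n
    have : afun = ⇑(head n) + rest n := by
      funext l
      show afun l = (head n) l + (afun l - (lcoe (R := R) (Q := Q) L) (head n) l)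
      have h0 : (lcoe (R := R) (Q := Q) L) (head n) l = (head n) l := rfl
      rw [h0]
      abel
    rw [this, map_add]
    congr 1
    exact hρcoe (head n)
  -- choose a coordinate beyond the support of ρ afun
  set nn : ℕ := ((ρ afun).support.sup fun l => l.down) + 1 with hnn
  have hout : (ρ afun) (ULift.up nn) = 0 := by
    rw [← Finsupp.notMem_support_iff]
    intro hmem
    have : nn ≤ (ρ afun).support.sup fun l => l.down :=
      Finset.le_sup (f := fun l : L => l.down) hmem
    omega
  have hval := congrArg (fun f : L →₀ Q => f (ULift.up nn)) (key (nn + 1))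
  simp only [hout, Finsupp.add_apply, head_apply] at hval
  have hnnlt : (ULift.up.{v} nn).down < nn + 1 := Nat.lt_succ_self nn
  rw [if_pos hnnlt] at hval
  -- so a nn = - (ρ (rest (nn+1))) (up nn), an element of Φ (nn+1)
  have hd : (ρ (rest (nn + 1))) (ULift.up nn) ∈ Dset Q q₀ (Rows (nn + 1)) (Vars (nn + 1)) := by
    have h1 := Dset_map ρ (rest_mem (nn + 1))
    exact Dset_map (Finsupp.lapply (ULift.up nn)) h1
  have heq : a nn = -((ρ (rest (nn + 1))) (ULift.up nn)) := by
    rw [eq_neg_iff_add_eq_zero]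
    exact hval.symm
  exact hna nn (heq ▸ Dset_neg hd)

end Chain

section Main
variable {N Q : Type v} [AddCommGroup N] [Module R N] [AddCommGroup Q] [Module R Q]

lemma main_split (g : N →ₗ[R] Q) (hg : IsPureEmbedding g)
    (hQpi : IsPureInjective (R := R) (ULift.{v} ℕ →₀ Q)) :
    ∃ ρ : Q →ₗ[R] N, ρ ∘ₗ g = LinearMap.id := by
  classical
  set 𝒮 : Set (Set (Q × N)) := {s | FinSolv g s} with h𝒮
  have hchain : ∀ c ⊆ 𝒮, IsChain (· ⊆ ·) c → c.Nonempty → ∃ ub ∈ 𝒮, ∀ s ∈ c, s ⊆ ub := by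
    intro c hc hch hne
    refine ⟨⋃₀ c, ?_, fun s hs => Set.subset_sUnion_of_mem hs⟩
    intro F hF hFf G hG hGf
    obtain ⟨t, htc, hGt⟩ : ∃ t ∈ c, G ⊆ t := by
      have hdir : DirectedOn (fun i j : Set (Q × N) => i ⊆ j) c := hch.directedOn
      have hsub : (hGf.toFinset : Set (Q × N)) ⊆ ⋃ i ∈ c, i := by
        rw [← Set.sUnion_eq_biUnion, hGf.coe_toFinset]; exact hG
      obtain ⟨t, htc, ht⟩ := hdir.exists_mem_subset_of_finset_subset_biUnion hne hsub
      exact ⟨t, htc, by rwa [hGf.coe_toFinset] at ht⟩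
    exact hc htc F hF hFf G hGt hGf
  obtain ⟨s, -, hsmax⟩ := zorn_subset_nonempty 𝒮 hchain ∅ (finSolv_empty g hg)
  have hs : FinSolv g s := hsmax.prop
  -- the domain of the maximal partial solution is all of `Q`
  have hdom : ∀ q : Q, ∃ n, (q, n) ∈ s := by
    by_contra hq
    push_neg at hq
    obtain ⟨q₀, hq₀⟩ := hq
    -- indices over finite subsystems
    set Idx := {p : Set ((Q →₀ R) × N) × Set (Q × N) //
      p.1 ⊆ bigSys g ∧ p.1.Finite ∧ p.2 ⊆ s ∧ p.2.Finite} with hIdx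
    set DN : Idx → Set N := fun i => Dset N q₀ (Prod.fst '' i.1.1) (Prod.fst '' i.1.2) with hDN
    set DQ : Idx → Set Q := fun i => Dset Q q₀ (Prod.fst '' i.1.1) (Prod.fst '' i.1.2) with hDQ
    have hDpure : ∀ (i : Idx) (n : N), n ∈ DN i ↔ g n ∈ DQ i := fun i n =>
      Dset_pure hg (i.2.2.1.image _) (i.2.2.2.2.image _) n
    -- there is a minimal DN
    have hmin : ∃ i : Idx, ∀ j : Idx, DN j ⊆ DN i → DN j = DN i := by
      by_contra hnomin
      push_neg at hnomin
      have step : ∀ i : Idx, ∃ j : Idx, i.1.1 ⊆ j.1.1 ∧ i.1.2 ⊆ j.1.2 ∧ DN j ⊂ DN i := by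
        intro i
        obtain ⟨j, hsub, hne⟩ := hnomin i
        have hk : ((i.1.1 ∪ j.1.1, i.1.2 ∪ j.1.2) : Set ((Q →₀ R) × N) × Set (Q × N)).1 ⊆ bigSys g ∧
            (i.1.1 ∪ j.1.1).Finite ∧ (i.1.2 ∪ j.1.2) ⊆ s ∧ (i.1.2 ∪ j.1.2).Finite :=
          ⟨Set.union_subset i.2.1 j.2.1, i.2.2.1.union j.2.2.1,
            Set.union_subset i.2.2.2.1 j.2.2.2.1, i.2.2.2.2.union j.2.2.2.2⟩
        refine ⟨⟨(i.1.1 ∪ j.1.1, i.1.2 ∪ j.1.2), hk⟩,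
          Set.subset_union_left, Set.subset_union_left, ?_⟩
        have h1 : DN ⟨(i.1.1 ∪ j.1.1, i.1.2 ∪ j.1.2), hk⟩ ⊆ DN j :=
          Dset_mono (Set.image_mono Set.subset_union_right)
            (Set.image_mono Set.subset_union_right)
        exact lt_of_le_of_lt h1 (lt_of_le_of_ne hsub hne)
      choose nxt h1 h2 h3 using step
      set i₀ : Idx := ⟨(∅, ∅), by simp, Set.finite_empty, by simp, Set.finite_empty⟩ with hi₀
      set seq : ℕ → Idx := fun n => nxt^[n] i₀ with hseq
      have hseqsucc : ∀ n, seq (n + 1) = nxt (seq n) := fun n =>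
        Function.iterate_succ_apply' nxt n i₀
      refine no_strict_chain (N := N) hQpi q₀
        (fun n => Prod.fst '' (seq n).1.1) (fun n => Prod.fst '' (seq n).1.2)
        (fun n => by rw [hseqsucc]; exact Set.image_mono (h1 (seq n)))
        (fun n => by rw [hseqsucc]; exact Set.image_mono (h2 (seq n)))
        (fun n => ?_)
      have hstr : DN (seq (n + 1)) ⊂ DN (seq n) := by rw [hseqsucc]; exact h3 (seq n)
      obtain ⟨x, hx1, hx2⟩ := Set.exists_of_ssubset hstr
      exact ⟨g x, (hDpure (seq n) x).1 hx1, fun hgx => hx2 ((hDpure (seq (n+1)) x).2 hgx)⟩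
    obtain ⟨i₀, hi₀⟩ := hmin
    obtain ⟨c₀, hc₀⟩ := Cset_nonempty hs q₀ i₀.2.1 i₀.2.2.1 i₀.2.2.2.1 i₀.2.2.2.2
    -- extending the maximal solution by (q₀, c₀) stays finitely solvable
    have hins : FinSolv g (insert (q₀, c₀) s) := by
      intro F hF hFf G' hG' hG'f
      set G : Set (Q × N) := G' \ {(q₀, c₀)} with hG
      have hGs : G ⊆ s := by
        rintro p ⟨hp1, hp2⟩
        rcases hG' hp1 with h | h
        · exact absurd h hp2
        · exact h
      set iU : Idx := ⟨(i₀.1.1 ∪ F, i₀.1.2 ∪ G),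
        Set.union_subset i₀.2.1 hF, i₀.2.2.1.union hFf,
        Set.union_subset i₀.2.2.2.1 hGs, i₀.2.2.2.2.union (hG'f.subset Set.diff_subset)⟩
        with hiU
      obtain ⟨c₁, hc₁⟩ := Cset_nonempty hs q₀ iU.2.1 iU.2.2.1 iU.2.2.2.1 iU.2.2.2.2
      have hc₁' : c₁ ∈ Cset q₀ i₀.1.1 i₀.1.2 :=
        Cset_mono Set.subset_union_left Set.subset_union_left hc₁
      have hd : c₀ - c₁ ∈ DN i₀ := Cset_sub_mem hc₀ hc₁'
      have hDeq : DN iU = DN i₀ :=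
        hi₀ iU (Dset_mono (Set.image_mono Set.subset_union_left)
          (Set.image_mono Set.subset_union_left))
      have hd' : c₀ - c₁ ∈ DN iU := hDeq ▸ hd
      have hc₀U : c₀ ∈ Cset q₀ (i₀.1.1 ∪ F) (i₀.1.2 ∪ G) := by
        have := Cset_add_mem hc₁ hd'
        simpa using this
      have hc₀F : c₀ ∈ Cset q₀ F G :=
        Cset_mono Set.subset_union_right Set.subset_union_right hc₀U
      obtain ⟨u, h1, h2, h3⟩ := hc₀F
      refine ⟨u, fun p hp => ?_, h3⟩
      by_cases hpe : p = (q₀, c₀)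
      · rw [hpe]; exact h1
      · exact h2 p ⟨hp, hpe⟩
    have : insert (q₀, c₀) s ⊆ s := hsmax.2 hins (Set.subset_insert _ _)
    exact hq₀ c₀ (this (Set.mem_insert _ _))
  -- define the retraction
  choose ρ₀ hρ₀ using hdom
  have solve1 : ∀ e ∈ bigSys g, ∀ G ⊆ s, G.Finite →
      ∃ u : Q → N, (∀ p ∈ G, u p.1 = p.2) ∧ Finsupp.linearCombination R u e.1 = e.2 := by
    intro e he G hGs hGf
    obtain ⟨u, h1, h2⟩ := hs {e} (Set.singleton_subset_iff.2 he) (Set.finite_singleton e)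
      G hGs hGf
    exact ⟨u, h1, h2 e rfl⟩
  have hadd : ∀ w w' : Q, ρ₀ (w + w') = ρ₀ w + ρ₀ w' := by
    intro w w'
    obtain ⟨u, h1, h2⟩ := solve1 _ (Or.inl ⟨w, w', rfl⟩)
      {(w + w', ρ₀ (w + w')), (w, ρ₀ w), (w', ρ₀ w')}
      (by rintro p (rfl | rfl | rfl) <;> exact hρ₀ _)
      ((Set.finite_singleton _).insert _ |>.insert _)
    simp only [map_sub, LC_single_one] at h2
    have e1 := h1 (w + w', ρ₀ (w + w')) (by simp)
    have e2 := h1 (w, ρ₀ w) (by simp)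
    have e3 := h1 (w', ρ₀ w') (by simp)
    simp only at e1 e2 e3
    rw [e1, e2, e3] at h2
    have h0 : ρ₀ (w + w') - ρ₀ w - ρ₀ w' = 0 := h2
    rw [sub_sub, sub_eq_zero] at h0
    exact h0
  have hsmul : ∀ (r : R) (w : Q), ρ₀ (r • w) = r • ρ₀ w := by
    intro r w
    obtain ⟨u, h1, h2⟩ := solve1 _ (Or.inr (Or.inl ⟨r, w, rfl⟩))
      {(r • w, ρ₀ (r • w)), (w, ρ₀ w)}
      (by rintro p (rfl | rfl) <;> exact hρ₀ _)
      ((Set.finite_singleton _).insert _)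
    simp only [map_sub, LC_single_one, Finsupp.linearCombination_single, one_smul] at h2
    have e1 := h1 (r • w, ρ₀ (r • w)) (by simp)
    have e2 := h1 (w, ρ₀ w) (by simp)
    simp only at e1 e2
    rw [e1, e2] at h2
    have h0 : ρ₀ (r • w) - r • ρ₀ w = 0 := h2
    rwa [sub_eq_zero] at h0
  have helt : ∀ n : N, ρ₀ (g n) = n := by
    intro n
    obtain ⟨u, h1, h2⟩ := solve1 _ (Or.inr (Or.inr ⟨n, rfl⟩))
      {(g n, ρ₀ (g n))}
      (by rintro p rfl; exact hρ₀ _)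
      (Set.finite_singleton _)
    simp only [LC_single_one] at h2
    have e1 := h1 (g n, ρ₀ (g n)) rfl
    simp only at e1
    rw [e1] at h2
    exact h2
  refine ⟨{ toFun := ρ₀, map_add' := hadd, map_smul' := hsmul }, ?_⟩
  ext n
  exact helt n

end Main

end Stmt18Aux

/-- Σ-pure-injective modules are Σ-pure-split.
If `T` is Σ-pure-injective, i.e. `T^{(κ)}` is pure-injective for every index set `κ`,
then every pure embedding `N ↪ M` with `M ∈ Add(T)` splits; in particular pure
submodules of modules in `Add(T)` are direct summands. -/
theorem stmt18 {R : Type u} [Ring R] (T : ModuleCat.{v} R)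
    (hT : ∀ ι : Type v, IsPureInjective (R := R) (ι →₀ ↥T)) :
    ∀ (N : Type v) [AddCommGroup N] [Module R N] (M : ModuleCat.{v} R),
      M ∈ AddClass' T → ∀ f : N →ₗ[R] ↥M, IsPureEmbedding f →
      ∃ r : ↥M →ₗ[R] N, r ∘ₗ f = LinearMap.id := by
  intro N _ _ M hM f hf
  obtain ⟨ι, sM, rM, hsr⟩ := hM
  have hpure : IsPureEmbedding (sM ∘ₗ f) :=
    Stmt18Aux.pure_comp hf (Stmt18Aux.pure_of_split sM rM hsr)
  have hQpi : IsPureInjective (R := R) (ULift.{v} ℕ →₀ (ι →₀ ↥T)) :=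
    Stmt18Aux.pureInjective_congr (Finsupp.finsuppProdLEquiv R) (hT (ULift.{v} ℕ × ι))
  obtain ⟨ρ, hρ⟩ := Stmt18Aux.main_split (sM ∘ₗ f) hpure hQpi
  refine ⟨ρ ∘ₗ sM, ?_⟩
  rw [LinearMap.comp_assoc]
  exact hρ
end
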